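/- arXiv:2303.11671 — 4 statements merged into one kernel-verified Lean document; each statement's English description precedes it below -/
import Mathlib

section
/- The canonical projection p_{n,n+1} : G≀S(n+1) → G≀S(n) is equivariant with respect to the two-sided action of G≀S(n): for every x ∈ G≀S(n+1) and all u, v ∈ G≀S(n), one has p_{n,n+1}(ι_{n,n+1}(u)·x·ι_{n,n+1}(v)) = u·p_{n,n+1}(x)·v. -/
namespace WreathPaper

/-- The permutation action of `S(n)` on `G^n`. -/
def permAut (G : Type*) [Group G] (n : ℕ) : Equiv.Perm (Fin n) →* MulAut (Fin n → G) where
  toFun s :=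
    { toFun := fun g => g ∘ s.symm
      invFun := fun g => g ∘ s
      left_inv := fun g => funext fun i => by simp
      right_inv := fun g => funext fun i => by simp
      map_mul' := fun g h => rfl }
  map_one' := by ext g i; rfl
  map_mul' := fun s t => by ext g i; rfl

/-- The wreath product `G ≀ S(n)`: underlying set `G^n × S(n)` with
`((g₁,…,gₙ),s)·((h₁,…,hₙ),t) = ((g₁h_{s⁻¹(1)},…,g_nh_{s⁻¹(n)}), st)`. -/
abbrev WP (G : Type*) [Group G] (n : ℕ) :=
  SemidirectProduct (Fin n → G) (Equiv.Perm (Fin n)) (permAut G n)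

namespace WP

variable {G : Type*} [Group G] {n : ℕ}

def wpEquivProd (G : Type*) [Group G] (n : ℕ) :
    WP G n ≃ (Fin n → G) × Equiv.Perm (Fin n) where
  toFun x := (x.left, x.right)
  invFun p := ⟨p.1, p.2⟩
  left_inv x := rfl
  right_inv p := rfl

instance [Fintype G] : Fintype (WP G n) := Fintype.ofEquiv _ (wpEquivProd G n).symm
instance [DecidableEq G] : DecidableEq (WP G n) := (wpEquivProd G n).decidableEq

/-- The cycle-product of `x = ((g₁,…,gₙ),s)` corresponding to the cycle of `s`
containing `i` (computed starting at `i`): `g_{s^{r-1}(i)} ⋯ g_{s(i)} g_i`. -/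
noncomputable def cycleProd (x : WP G n) (i : Fin n) : G :=
  (((List.range (Function.minimalPeriod (⇑x.right) i)).reverse).map
    fun j => x.left ((x.right ^ j) i)).prod

/-- `[x]_c`: the number of cycles of `x` whose cycle-product lies in `c`
(cycles are counted via their minimal representative). -/
noncomputable def cycleCount (x : WP G n) (c : Set G) : ℕ :=
  Nat.card {i : Fin n // (∀ m : ℕ, i ≤ (x.right ^ m) i) ∧ cycleProd x i ∈ c}

/-- The number of cycles of `x` of length `j` whose cycle-product lies in `c`. -/
noncomputable def cycleCountLen (x : WP G n) (c : Set G) (j : ℕ) : ℕ :=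
  Nat.card {i : Fin n // (∀ m : ℕ, i ≤ (x.right ^ m) i) ∧
    Function.minimalPeriod (⇑x.right) i = j ∧ cycleProd x i ∈ c}

/-- Removing the point `n+1` from a permutation of `{1,…,n+1}`. -/
def projPerm (s : Equiv.Perm (Fin (n + 1))) : Equiv.Perm (Fin n) :=
  Equiv.removeNone (finSuccEquivLast.symm.trans (s.trans finSuccEquivLast))

/-- The canonical projection `p_{n,n+1} : G ≀ S(n+1) → G ≀ S(n)`. -/
def proj (x : WP G (n + 1)) : WP G n :=
  ⟨fun i => if x.right (Fin.last n) = Fin.castSucc i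
      then x.left (Fin.castSucc i) * x.left (Fin.last n)
      else x.left (Fin.castSucc i),
    projPerm x.right⟩

def castEquiv {m n : ℕ} (h : m ≤ n) : Fin m ≃ {i : Fin n // (i : ℕ) < m} where
  toFun i := ⟨⟨(i : ℕ), lt_of_lt_of_le i.isLt h⟩, i.isLt⟩
  invFun i := ⟨(i.1 : ℕ), i.2⟩
  left_inv i := rfl
  right_inv i := rfl

/-- The canonical embedding `ι_{m,n} : G ≀ S(m) → G ≀ S(n)` for `m ≤ n`. -/
def emb {m n : ℕ} (h : m ≤ n) (x : WP G m) : WP G n :=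
  ⟨fun i => if hi : (i : ℕ) < m then x.left ⟨(i : ℕ), hi⟩ else 1,
    x.right.extendDomain (castEquiv h)⟩

end WP

/-- `c` is a conjugacy class of `G`. -/
def IsConjClass {G : Type*} [Group G] (c : Set G) : Prop :=
  ∃ g : G, c = {h | IsConj g h}

end WreathPaper

namespace WreathPaper
namespace WP

variable {G : Type*} [Group G] {n : ℕ}

lemma extCast (s : Equiv.Perm (Fin n)) (i : Fin n) :
    s.extendDomain (castEquiv (Nat.le_succ n)) (Fin.castSucc i) = Fin.castSucc (s i) :=
  Equiv.Perm.extendDomain_apply_image s (castEquiv (Nat.le_succ n)) i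

lemma extLast (s : Equiv.Perm (Fin n)) :
    s.extendDomain (castEquiv (Nat.le_succ n)) (Fin.last n) = Fin.last n :=
  Equiv.Perm.extendDomain_apply_not_subtype _ _ (by simp)

lemma extLast_iff (s : Equiv.Perm (Fin n)) (y : Fin (n + 1)) :
    s.extendDomain (castEquiv (Nat.le_succ n)) y = Fin.last n ↔ y = Fin.last n :=
  ⟨fun h => (s.extendDomain _).injective (h.trans (extLast s).symm), fun h => h ▸ extLast s⟩

lemma castSucc_projPerm (t : Equiv.Perm (Fin (n+1))) (i : Fin n) :
    Fin.castSucc (projPerm t i) =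
      if t (Fin.castSucc i) = Fin.last n then t (Fin.last n) else t (Fin.castSucc i) := by
  set e := finSuccEquivLast.symm.trans (t.trans finSuccEquivLast) with he
  have hei : e (some i) = finSuccEquivLast (t (Fin.castSucc i)) := by
    simp [he]
  by_cases h : t (Fin.castSucc i) = Fin.last n
  · have h0 : e (some i) = none := by rw [hei, h, finSuccEquivLast_last]
    have h1 : some (projPerm t i) = e none := Equiv.removeNone_none e h0
    have h2 : e none = finSuccEquivLast (t (Fin.last n)) := by simp [he]
    rw [if_pos h]
    calc Fin.castSucc (projPerm t i)
        = finSuccEquivLast.symm (some (projPerm t i)) := (finSuccEquivLast_symm_some _).symm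
      _ = finSuccEquivLast.symm (finSuccEquivLast (t (Fin.last n))) := by rw [h1.trans h2]
      _ = t (Fin.last n) := Equiv.symm_apply_apply _ _
  · obtain ⟨j, hj⟩ := Fin.exists_castSucc_eq.2 h
    have h0 : e (some i) = some j := by rw [hei, ← hj, finSuccEquivLast_castSucc]
    have h1 : some (projPerm t i) = some j := (Equiv.removeNone_some e ⟨j, h0⟩).trans h0
    rw [if_neg h, ← hj, Option.some_injective _ h1]

lemma mul_left_apply (A B : WP G n) (i : Fin n) :
    (A * B).left i = A.left i * B.left (A.right⁻¹ i) := rfl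

lemma embLeft_castSucc (u : WP G n) (i : Fin n) :
    (emb (Nat.le_succ n) u).left (Fin.castSucc i) = u.left i := by
  simp [emb]

lemma embLeft_last (u : WP G n) :
    (emb (Nat.le_succ n) u).left (Fin.last n) = 1 := by
  simp [emb]

lemma embRight (u : WP G n) :
    (emb (Nat.le_succ n) u).right = u.right.extendDomain (castEquiv (Nat.le_succ n)) := rfl

end WP
end WreathPaper

namespace WreathPaper

open WP in
/-- The canonical projection `p_{n,n+1} : G ≀ S(n+1) → G ≀ S(n)` is equivariant with
respect to the two-sided action of `G ≀ S(n)`. -/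
theorem proj_equivariant {G : Type*} [Group G] {n : ℕ}
    (x : WP G (n + 1)) (u v : WP G n) :
    proj (emb (Nat.le_succ n) u * x * emb (Nat.le_succ n) v) = u * proj x * v := by
  set s := u.right with hs
  set w := v.right with hw
  set t := x.right with ht
  set s' := s.extendDomain (castEquiv (Nat.le_succ n)) with hs'
  set w' := w.extendDomain (castEquiv (Nat.le_succ n)) with hw'
  have hXr : (emb (Nat.le_succ n) u * x * emb (Nat.le_succ n) v).right = s' * t * w' := rfl
  have hs'inv : s'⁻¹ = s⁻¹.extendDomain (castEquiv (Nat.le_succ n)) :=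
    Equiv.Perm.extendDomain_inv _ _
  have hRlast : (s' * t * w') (Fin.last n) = s' (t (Fin.last n)) := by
    simp [Equiv.Perm.mul_apply, hw', extLast]
  refine SemidirectProduct.ext ?_ ?_
  · -- left components
    funext i
    have hXl : ∀ j : Fin (n + 1),
        (emb (Nat.le_succ n) u * x * emb (Nat.le_succ n) v).left j =
          (emb (Nat.le_succ n) u).left j * x.left (s'⁻¹ j) *
            (emb (Nat.le_succ n) v).left (t⁻¹ (s'⁻¹ j)) := by
      intro j
      rw [mul_left_apply, mul_left_apply]
      rfl
    have hsinv : s'⁻¹ (Fin.castSucc i) = Fin.castSucc (s⁻¹ i) := by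
      rw [hs'inv]; exact extCast _ _
    have hsinvlast : s'⁻¹ (Fin.last n) = Fin.last n := by
      rw [hs'inv]; exact extLast _
    have hlhs : (proj (emb (Nat.le_succ n) u * x * emb (Nat.le_succ n) v)).left i =
        if s' (t (Fin.last n)) = Fin.castSucc i
        then (u.left i * x.left (Fin.castSucc (s⁻¹ i)) *
                (emb (Nat.le_succ n) v).left (t⁻¹ (Fin.castSucc (s⁻¹ i)))) *
             (x.left (Fin.last n) * (emb (Nat.le_succ n) v).left (t⁻¹ (Fin.last n)))
        else u.left i * x.left (Fin.castSucc (s⁻¹ i)) *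
                (emb (Nat.le_succ n) v).left (t⁻¹ (Fin.castSucc (s⁻¹ i))) := by
      show (if (s' * t * w') (Fin.last n) = Fin.castSucc i then _ * _ else _) = _
      rw [hRlast, hXl, hXl, hsinv, hsinvlast, embLeft_castSucc, embLeft_last, one_mul]
    rw [hlhs]
    have hrhs : (u * proj x * v).left i =
        (if t (Fin.last n) = Fin.castSucc (s⁻¹ i)
          then u.left i * (x.left (Fin.castSucc (s⁻¹ i)) * x.left (Fin.last n))
          else u.left i * x.left (Fin.castSucc (s⁻¹ i))) *
          v.left ((projPerm t)⁻¹ (s⁻¹ i)) := by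
      rw [mul_left_apply, mul_left_apply]
      have : (u * proj x).right⁻¹ i = (projPerm t)⁻¹ (s⁻¹ i) := rfl
      rw [this]
      congr 1
      show u.left i * (if t (Fin.last n) = Fin.castSucc (s⁻¹ i) then _ * _ else _) = _
      split <;> rfl
    rw [hrhs]
    by_cases hc : t (Fin.last n) = Fin.castSucc (s⁻¹ i)
    · have hcond : s' (t (Fin.last n)) = Fin.castSucc i := by
        rw [hc, hs', extCast, Equiv.Perm.inv_def, Equiv.apply_symm_apply]
      rw [if_pos hcond, if_pos hc]
      have hb1 : t⁻¹ (Fin.castSucc (s⁻¹ i)) = Fin.last n := by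
        rw [← hc, Equiv.Perm.inv_def, Equiv.symm_apply_apply]
      set k := (projPerm t)⁻¹ (s⁻¹ i) with hk
      have hpk : projPerm t k = s⁻¹ i := Equiv.apply_symm_apply _ _
      have hck : t (Fin.castSucc k) = Fin.last n := by
        by_contra hne
        have h1 := castSucc_projPerm t k
        rw [if_neg hne, hpk] at h1
        exact (Fin.castSucc_lt_last k).ne (t.injective (hc.trans h1)).symm
      have hb2 : t⁻¹ (Fin.last n) = Fin.castSucc k := by
        rw [← hck, Equiv.Perm.inv_def, Equiv.symm_apply_apply]
      rw [hb1, hb2, embLeft_last, embLeft_castSucc, mul_one]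
      group
    · have hcond : ¬ s' (t (Fin.last n)) = Fin.castSucc i := by
        intro hcon
        have hne : t (Fin.last n) ≠ Fin.last n := by
          intro h
          rw [h, extLast] at hcon
          exact (Fin.castSucc_lt_last i).ne hcon.symm
        obtain ⟨m, hm⟩ := Fin.exists_castSucc_eq.2 hne
        rw [← hm, hs', extCast] at hcon
        apply hc
        rw [← hm]
        congr 1
        have : s m = i := Fin.castSucc_injective _ hcon
        rw [← this, Equiv.Perm.inv_def, Equiv.symm_apply_apply]
      rw [if_neg hcond, if_neg hc]
      set k := (projPerm t)⁻¹ (s⁻¹ i) with hk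
      have hpk : projPerm t k = s⁻¹ i := Equiv.apply_symm_apply _ _
      have hck : t (Fin.castSucc k) = Fin.castSucc (s⁻¹ i) := by
        have h1 := castSucc_projPerm t k
        by_cases hne : t (Fin.castSucc k) = Fin.last n
        · rw [if_pos hne, hpk] at h1
          exact absurd h1.symm hc
        · rw [if_neg hne, hpk] at h1
          exact h1.symm
      have hb1 : t⁻¹ (Fin.castSucc (s⁻¹ i)) = Fin.castSucc k := by
        rw [← hck, Equiv.Perm.inv_def, Equiv.symm_apply_apply]
      rw [hb1, embLeft_castSucc]
  · -- right components
    show projPerm (s' * t * w') = s * projPerm t * w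
    refine Equiv.ext fun i => Fin.castSucc_injective n ?_
    rw [castSucc_projPerm]
    have e1 : (s' * t * w') (Fin.castSucc i) = s' (t (Fin.castSucc (w i))) := by
      simp [Equiv.Perm.mul_apply, hw', extCast]
    have e2 : Fin.castSucc ((s * projPerm t * w) i) = s' (Fin.castSucc (projPerm t (w i))) := by
      rw [hs']
      rw [extCast]
      rfl
    rw [e1, e2, hRlast, castSucc_projPerm, apply_ite s']
    simp only [hs', extLast_iff]


end WreathPaper
end

section
/- Fix n ≥ 1 and l ∈ {1,…,k}. For W = (w_1,w_2) ∈ (G≀S(n)) × (G≀S(n)) and y ∈ G≀S(n) (resp. y ∈ G≀S(n+1)), write yW := w_2^{-1}·y·w_1 (resp. yW := ι(w_2)^{-1}·y·ι(w_1), with ι the embedding of G≀S(n) into G≀S(n+1)). Suppose W_1,…,W_m ∈ (G≀S(n)) × (G≀S(n)) are such that for each p ∈ {1,…,m}, every x_n ∈ G≀S(n), and every x_{n+1} ∈ G≀S(n+1) with p_{n,n+1}(x_{n+1}) = x_n, one has [x_n W_p]_{c_l} − [x_n]_{c_l} = [x_{n+1} W_p]_{c_l} − [x_{n+1}]_{c_l}.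 Then for every such pair (x_n, x_{n+1}) also [x_n W_1⋯W_m]_{c_l} − [x_n]_{c_l} = [x_{n+1} W_1⋯W_m]_{c_l} − [x_{n+1}]_{c_l}, where W_1⋯W_m is the componentwise product. -/
namespace WreathPaper

namespace WP

variable {G : Type*} [Group G] {n : ℕ}

-- NEW LEMMAS BELOW

lemma embPerm_castSucc (a : Equiv.Perm (Fin n)) (i : Fin n) :
    a.extendDomain (castEquiv (Nat.le_succ n)) (Fin.castSucc i) = Fin.castSucc (a i) := by
  have h : ((Fin.castSucc i : Fin (n + 1)) : ℕ) < n := i.isLt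
  have := Equiv.Perm.extendDomain_apply_subtype (e := a) (f := castEquiv (Nat.le_succ n)) h
  rw [this]
  rfl

lemma embPerm_last (a : Equiv.Perm (Fin n)) :
    a.extendDomain (castEquiv (Nat.le_succ n)) (Fin.last n) = Fin.last n :=
  Equiv.Perm.extendDomain_apply_not_subtype _ _ (lt_irrefl n)

lemma projPerm_eq_of_castSucc (s : Equiv.Perm (Fin (n + 1))) {i j : Fin n}
    (h : s (Fin.castSucc i) = Fin.castSucc j) : projPerm s i = j := by
  have h2 : (finSuccEquivLast.symm.trans (s.trans finSuccEquivLast)) (some i) = some j := by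
    simp [Equiv.trans_apply, h]
  have := Equiv.removeNone_some (finSuccEquivLast.symm.trans (s.trans finSuccEquivLast))
    (x := i) ⟨j, h2⟩
  rw [h2] at this
  exact Option.some_injective _ this

lemma projPerm_eq_of_last (s : Equiv.Perm (Fin (n + 1))) {i j : Fin n}
    (h1 : s (Fin.castSucc i) = Fin.last n) (h2 : s (Fin.last n) = Fin.castSucc j) :
    projPerm s i = j := by
  have hn : (finSuccEquivLast.symm.trans (s.trans finSuccEquivLast)) (some i) = none := by
    simp [Equiv.trans_apply, h1]
  have := Equiv.removeNone_none (finSuccEquivLast.symm.trans (s.trans finSuccEquivLast)) hn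
  have h3 : (finSuccEquivLast.symm.trans (s.trans finSuccEquivLast)) none = some j := by
    simp [Equiv.trans_apply, h2]
  rw [h3] at this
  exact Option.some_injective _ this

lemma ne_last_of_castSucc {s : Equiv.Perm (Fin (n + 1))} {i : Fin n}
    (h : s (Fin.castSucc i) = Fin.last n) : s (Fin.last n) ≠ Fin.last n := fun hc => by
  have := s.injective (h.trans hc.symm)
  exact absurd this (Fin.castSucc_lt_last i).ne

lemma projPerm_embPerm_mul (a : Equiv.Perm (Fin n)) (s : Equiv.Perm (Fin (n + 1))) :
    projPerm (a.extendDomain (castEquiv (Nat.le_succ n)) * s) = a * projPerm s := by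
  set P := a.extendDomain (castEquiv (Nat.le_succ n)) with hP
  ext i
  rcases Fin.eq_castSucc_or_eq_last (s (Fin.castSucc i)) with ⟨j, hj⟩ | hl
  · rw [projPerm_eq_of_castSucc (P * s)
      (by rw [Equiv.Perm.mul_apply, hj, embPerm_castSucc]),
      Equiv.Perm.mul_apply, projPerm_eq_of_castSucc s hj]
  · rcases Fin.eq_castSucc_or_eq_last (s (Fin.last n)) with ⟨j, hj⟩ | hl'
    · rw [projPerm_eq_of_last (P * s)
        (by rw [Equiv.Perm.mul_apply, hl, embPerm_last])
        (by rw [Equiv.Perm.mul_apply, hj, embPerm_castSucc]),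
        Equiv.Perm.mul_apply, projPerm_eq_of_last s hl hj]
    · exact absurd hl' (ne_last_of_castSucc hl)

lemma projPerm_mul_embPerm (b : Equiv.Perm (Fin n)) (s : Equiv.Perm (Fin (n + 1))) :
    projPerm (s * b.extendDomain (castEquiv (Nat.le_succ n))) = projPerm s * b := by
  set P := b.extendDomain (castEquiv (Nat.le_succ n)) with hP
  ext i
  rcases Fin.eq_castSucc_or_eq_last (s (Fin.castSucc (b i))) with ⟨j, hj⟩ | hl
  · rw [projPerm_eq_of_castSucc (s * P)
      (by rw [Equiv.Perm.mul_apply, embPerm_castSucc, hj]),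
      Equiv.Perm.mul_apply, projPerm_eq_of_castSucc s hj]
  · rcases Fin.eq_castSucc_or_eq_last (s (Fin.last n)) with ⟨j, hj⟩ | hl'
    · rw [projPerm_eq_of_last (s * P)
        (by rw [Equiv.Perm.mul_apply, embPerm_castSucc, hl])
        (by rw [Equiv.Perm.mul_apply, embPerm_last, hj]),
        Equiv.Perm.mul_apply, projPerm_eq_of_last s hl hj]
    · exact absurd hl' (ne_last_of_castSucc hl)


lemma wp_ext {x y : WP G n} (h1 : x.left = y.left) (h2 : x.right = y.right) : x = y := by
  cases x; cases y; cases h1; cases h2; rfl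

lemma permAut_apply (s : Equiv.Perm (Fin n)) (g : Fin n → G) (i : Fin n) :
    permAut G n s g i = g (s⁻¹ i) := rfl

lemma emb_right (a : WP G n) :
    (emb (Nat.le_succ n) a).right = a.right.extendDomain (castEquiv (Nat.le_succ n)) := rfl

lemma emb_left_castSucc (a : WP G n) (i : Fin n) :
    (emb (Nat.le_succ n) a).left (Fin.castSucc i) = a.left i := dif_pos i.isLt

lemma emb_left_last (a : WP G n) :
    (emb (Nat.le_succ n) a).left (Fin.last n) = 1 := dif_neg (lt_irrefl n)

lemma embPerm_inv_castSucc (a : Equiv.Perm (Fin n)) (i : Fin n) :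
    (a.extendDomain (castEquiv (Nat.le_succ n)))⁻¹ (Fin.castSucc i) = Fin.castSucc (a⁻¹ i) := by
  rw [Equiv.Perm.extendDomain_inv, embPerm_castSucc]

lemma embPerm_inv_last (a : Equiv.Perm (Fin n)) :
    (a.extendDomain (castEquiv (Nat.le_succ n)))⁻¹ (Fin.last n) = Fin.last n := by
  rw [Equiv.Perm.extendDomain_inv, embPerm_last]

lemma proj_left (z : WP G (n + 1)) (i : Fin n) :
    (proj z).left i = if z.right (Fin.last n) = Fin.castSucc i
      then z.left (Fin.castSucc i) * z.left (Fin.last n)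
      else z.left (Fin.castSucc i) := rfl

lemma proj_right (z : WP G (n + 1)) : (proj z).right = projPerm z.right := rfl

lemma emb_one : emb (Nat.le_succ n) (1 : WP G n) = 1 := by
  apply wp_ext
  · funext i
    show (if hi : (i : ℕ) < n then (1 : WP G n).left ⟨(i : ℕ), hi⟩ else 1) = (1 : WP G (n+1)).left i
    split <;> rfl
  · exact Equiv.Perm.extendDomain_one _

lemma emb_mul (a b : WP G n) :
    emb (Nat.le_succ n) (a * b) = emb (Nat.le_succ n) a * emb (Nat.le_succ n) b := by
  apply wp_ext
  · funext i
    rw [SemidirectProduct.mul_left, Pi.mul_apply, permAut_apply, emb_right]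
    by_cases hi : (i : ℕ) < n
    · have hic : i = Fin.castSucc ⟨(i : ℕ), hi⟩ := Fin.ext rfl
      rw [hic, emb_left_castSucc, emb_left_castSucc, embPerm_inv_castSucc, emb_left_castSucc,
        SemidirectProduct.mul_left, Pi.mul_apply, permAut_apply]
    · have hic : i = Fin.last n := Fin.ext (le_antisymm (Nat.lt_succ_iff.mp i.isLt) (le_of_not_gt hi))
      rw [hic, emb_left_last, emb_left_last, embPerm_inv_last, emb_left_last, one_mul]
  · exact (Equiv.Perm.extendDomain_mul _ _ _).symm

lemma emb_inv (a : WP G n) : emb (Nat.le_succ n) a⁻¹ = (emb (Nat.le_succ n) a)⁻¹ :=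
  eq_inv_of_mul_eq_one_left (by rw [← emb_mul, inv_mul_cancel, emb_one])

lemma proj_emb_mul (a : WP G n) (y : WP G (n + 1)) :
    proj (emb (Nat.le_succ n) a * y) = a * proj y := by
  apply wp_ext
  · funext i
    simp only [proj_left, proj_right, SemidirectProduct.mul_left, SemidirectProduct.mul_right,
      Pi.mul_apply, permAut_apply, emb_right, Equiv.Perm.mul_apply,
      embPerm_inv_castSucc, embPerm_inv_last, emb_left_castSucc, emb_left_last, one_mul]
    rcases Fin.eq_castSucc_or_eq_last (y.right (Fin.last n)) with ⟨j, hj⟩ | hl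
    · rw [hj, embPerm_castSucc]
      by_cases hij : a.right j = i
      · have hj' : a.right⁻¹ i = j := by rw [← hij, Equiv.Perm.inv_eq_iff_eq]
        rw [if_pos (by rw [hij]), if_pos (by rw [hj']), hj', mul_assoc]
      · rw [if_neg (fun hc => hij (Fin.castSucc_injective n hc)),
          if_neg (fun hc => hij (by
            have h1 : j = a.right⁻¹ i := Fin.castSucc_injective n hc
            rw [h1, ← Equiv.Perm.eq_inv_iff_eq]))]
    · rw [hl, embPerm_last, if_neg (Fin.castSucc_lt_last i).ne',
        if_neg (Fin.castSucc_lt_last _).ne']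
  · simp only [proj_right, SemidirectProduct.mul_right, emb_right, projPerm_embPerm_mul]

lemma proj_mul_emb (b : WP G n) (y : WP G (n + 1)) :
    proj (y * emb (Nat.le_succ n) b) = proj y * b := by
  apply wp_ext
  · funext i
    simp only [proj_left, proj_right, SemidirectProduct.mul_left, SemidirectProduct.mul_right,
      Pi.mul_apply, permAut_apply, emb_right, Equiv.Perm.mul_apply,
      embPerm_last, emb_left_castSucc, emb_left_last]
    rcases Fin.eq_castSucc_or_eq_last (y.right⁻¹ (Fin.castSucc i)) with ⟨j, hj⟩ | hl
    · have hsj : y.right (Fin.castSucc j) = Fin.castSucc i := by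
        rw [← hj, ← Equiv.Perm.eq_inv_iff_eq]
      have hpj : (projPerm y.right)⁻¹ i = j := by
        rw [← projPerm_eq_of_castSucc y.right hsj, Equiv.Perm.inv_eq_iff_eq]
      have hcond : y.right (Fin.last n) ≠ Fin.castSucc i := fun hc => by
        have := y.right.injective (hc.trans hsj.symm)
        exact absurd this.symm (Fin.castSucc_lt_last j).ne
      rw [if_neg hcond, if_neg hcond, hj, hpj, emb_left_castSucc]
    · have hcond : y.right (Fin.last n) = Fin.castSucc i := by
        rw [← hl, ← Equiv.Perm.eq_inv_iff_eq]
      rcases Fin.eq_castSucc_or_eq_last (y.right⁻¹ (Fin.last n)) with ⟨j', hj'⟩ | hl'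
      · have hsj' : y.right (Fin.castSucc j') = Fin.last n := by
          rw [← hj', ← Equiv.Perm.eq_inv_iff_eq]
        have hpj' : (projPerm y.right)⁻¹ i = j' := by
          rw [← projPerm_eq_of_last y.right hsj' hcond, Equiv.Perm.inv_eq_iff_eq]
        rw [if_pos hcond, if_pos hcond, hl, hj', emb_left_last, emb_left_castSucc, hpj',
          mul_one, mul_assoc]
      · exfalso
        have := y.right⁻¹.injective (hl.trans hl'.symm)
        exact absurd this (Fin.castSucc_lt_last i).ne
  · simp only [proj_right, SemidirectProduct.mul_right, emb_right, projPerm_mul_embPerm]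

end WP

end WreathPaper

namespace WreathPaper


open WP in
lemma cocycle_condition_list {G : Type*} [Group G] {n : ℕ} (c : Set G)
    (L : List (WP G n × WP G n))
    (hL : ∀ V ∈ L, ∀ (xn : WP G n) (xn1 : WP G (n + 1)), proj xn1 = xn →
      (cycleCount (V.2⁻¹ * xn * V.1) c : ℤ) - (cycleCount xn c : ℤ)
        = (cycleCount ((emb (Nat.le_succ n) V.2)⁻¹ * xn1 * emb (Nat.le_succ n) V.1) c : ℤ)
          - (cycleCount xn1 c : ℤ)) :
    ∀ (xn : WP G n) (xn1 : WP G (n + 1)), proj xn1 = xn →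
      (cycleCount ((L.prod).2⁻¹ * xn * (L.prod).1) c : ℤ) - (cycleCount xn c : ℤ)
        = (cycleCount ((emb (Nat.le_succ n) (L.prod).2)⁻¹ * xn1
            * emb (Nat.le_succ n) (L.prod).1) c : ℤ) - (cycleCount xn1 c : ℤ) := by
  induction L with
  | nil =>
    intro xn xn1 h
    simp only [List.prod_nil, Prod.fst_one, Prod.snd_one, inv_one, one_mul, mul_one, emb_one]
    ring
  | cons V T ih =>
    intro xn xn1 h
    have hV := hL V (List.mem_cons_self) xn xn1 h
    have hproj : proj ((emb (Nat.le_succ n) V.2)⁻¹ * xn1 * emb (Nat.le_succ n) V.1)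
        = V.2⁻¹ * xn * V.1 := by
      rw [← emb_inv, proj_mul_emb, proj_emb_mul, h]
    have hT := ih (fun V' hV' => hL V' (List.mem_cons_of_mem _ hV')) _ _ hproj
    have e1 : ((V :: T).prod).1 = V.1 * (T.prod).1 := by simp
    have e2 : ((V :: T).prod).2 = V.2 * (T.prod).2 := by simp
    rw [e1, e2]
    have g1 : (V.2 * (T.prod).2)⁻¹ * xn * (V.1 * (T.prod).1)
        = (T.prod).2⁻¹ * (V.2⁻¹ * xn * V.1) * (T.prod).1 := by group
    have g2 : (emb (Nat.le_succ n) (V.2 * (T.prod).2))⁻¹ * xn1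
          * emb (Nat.le_succ n) (V.1 * (T.prod).1)
        = (emb (Nat.le_succ n) (T.prod).2)⁻¹
          * ((emb (Nat.le_succ n) V.2)⁻¹ * xn1 * emb (Nat.le_succ n) V.1)
          * emb (Nat.le_succ n) (T.prod).1 := by
      rw [emb_mul, emb_mul]; group
    rw [g1, g2]
    linarith [hV, hT]

open WP in
/-- If the cocycle compatibility condition
`[xₙ W]_{c_l} − [xₙ]_{c_l} = [x_{n+1} W]_{c_l} − [x_{n+1}]_{c_l}` (for all pairs
`xₙ = p_{n,n+1}(x_{n+1})`) holds for `W₁, …, W_m ∈ (G≀S(n)) × (G≀S(n))`, then it holds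
for their (componentwise) product `W₁⋯W_m`, where `y (w₁,w₂) := w₂⁻¹ y w₁`. -/
theorem cocycle_condition_mul {G : Type*} [Group G] {n : ℕ} (c : Set G)
    (hc : IsConjClass c) (m : ℕ) (W : Fin m → WP G n × WP G n)
    (hW : ∀ (p : Fin m) (xn : WP G n) (xn1 : WP G (n + 1)), proj xn1 = xn →
      (cycleCount ((W p).2⁻¹ * xn * (W p).1) c : ℤ) - (cycleCount xn c : ℤ)
        = (cycleCount ((emb (Nat.le_succ n) (W p).2)⁻¹ * xn1
            * emb (Nat.le_succ n) (W p).1) c : ℤ) - (cycleCount xn1 c : ℤ))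
    (xn : WP G n) (xn1 : WP G (n + 1)) (h : proj xn1 = xn) :
    (cycleCount (((List.ofFn W).prod).2⁻¹ * xn * ((List.ofFn W).prod).1) c : ℤ)
        - (cycleCount xn c : ℤ)
      = (cycleCount ((emb (Nat.le_succ n) ((List.ofFn W).prod).2)⁻¹ * xn1
          * emb (Nat.le_succ n) ((List.ofFn W).prod).1) c : ℤ)
        - (cycleCount xn1 c : ℤ) := by
  exact cocycle_condition_list c (List.ofFn W)
    (fun V hV => by
      obtain ⟨p, hp⟩ := List.mem_ofFn.mp hV
      exact hp ▸ hW p)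
    xn xn1 h

end WreathPaper
end

section
/- Let g_1,…,g_n ∈ G and set w = ((g_1,…,g_n), e_{S(n)}) ∈ G≀S(n), where e_{S(n)} is the identity permutation. Then for every l ∈ {1,…,k}, every x_n ∈ G≀S(n), and every x_{n+1} ∈ G≀S(n+1) with p_{n,n+1}(x_{n+1}) = x_n: [w·x_n]_{c_l} − [x_n]_{c_l} = [ι(w)·x_{n+1}]_{c_l} − [x_{n+1}]_{c_l}, where ι is the embedding of G≀S(n) into G≀S(n+1). -/
namespace WreathPaper
namespace WP

variable {G : Type*} [Group G] {n : ℕ}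

theorem pow_apply_succ {α : Type*} (τ : Equiv.Perm α) (k : ℕ) (y : α) :
    (τ ^ (k+1)) y = τ ((τ ^ k) y) := by
  rw [pow_succ', Equiv.Perm.mul_apply]

theorem projPerm_step (σ : Equiv.Perm (Fin (n+1))) (i : Fin n) :
    Fin.castSucc (projPerm σ i) =
      if σ (Fin.castSucc i) = Fin.last n then σ (Fin.last n) else σ (Fin.castSucc i) := by
  set e := (finSuccEquivLast.symm.trans (σ.trans finSuccEquivLast)) with he
  have hesome : ∀ j : Fin n, e (some j) = finSuccEquivLast (σ (Fin.castSucc j)) := by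
    intro j; simp [he]
  by_cases h : σ (Fin.castSucc i) = Fin.last n
  · rw [if_pos h]
    have h1 : e (some i) = none := by rw [hesome, h, finSuccEquivLast_last]
    have := Equiv.removeNone_none e h1
    rw [he] at this
    have h2 : e none = finSuccEquivLast (σ (Fin.last n)) := by simp [he]
    rw [projPerm]
    rw [← he] at this ⊢
    rw [h2] at this
    rcases Fin.eq_castSucc_or_eq_last (σ (Fin.last n)) with ⟨j, hj⟩ | hj
    · rw [hj, finSuccEquivLast_castSucc] at this
      rw [hj]; exact congrArg Fin.castSucc (Option.some_injective _ this)
    · rw [hj, finSuccEquivLast_last] at this; cases this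
  · rw [if_neg h]
    rcases Fin.eq_castSucc_or_eq_last (σ (Fin.castSucc i)) with ⟨j, hj⟩ | hj
    · have h1 : e (some i) = some j := by rw [hesome, hj, finSuccEquivLast_castSucc]
      have := Equiv.removeNone_some e ⟨j, h1⟩
      rw [projPerm, ← he, h1] at *
      rw [hj]
      exact congrArg Fin.castSucc (Option.some_injective _ (this.trans h1.symm)) |>.symm ▸ rfl
    · exact absurd hj h

section Iter

variable (σ : Equiv.Perm (Fin (n+1))) (i : Fin n)

theorem fwd : ∀ m : ℕ, ∃ j : ℕ,
    Fin.castSucc ((projPerm σ ^ m) i) = (σ ^ j) (Fin.castSucc i) := by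
  intro m
  induction m with
  | zero => exact ⟨0, rfl⟩
  | succ m ih =>
    obtain ⟨j, hj⟩ := ih
    have hstep := projPerm_step σ ((projPerm σ ^ m) i)
    rw [hj] at hstep
    by_cases h : σ ((σ ^ j) (Fin.castSucc i)) = Fin.last n
    · refine ⟨j + 2, ?_⟩
      rw [pow_apply_succ, hstep, if_pos h, pow_apply_succ, pow_apply_succ, h]
    · refine ⟨j + 1, ?_⟩
      rw [pow_apply_succ, hstep, if_neg h, pow_apply_succ]

theorem bwd : ∀ j : ℕ,
    (∃ m, (σ ^ j) (Fin.castSucc i) = Fin.castSucc ((projPerm σ ^ m) i)) ∨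
    ((σ ^ j) (Fin.castSucc i) = Fin.last n ∧
      ∃ m, (σ ^ (j+1)) (Fin.castSucc i) = Fin.castSucc ((projPerm σ ^ m) i)) := by
  intro j
  induction j with
  | zero => exact Or.inl ⟨0, rfl⟩
  | succ j ih =>
    rcases ih with ⟨m, hm⟩ | ⟨hL, m, hm⟩
    · have hstep := projPerm_step σ ((projPerm σ ^ m) i)
      rw [← hm] at hstep
      by_cases h : σ ((σ ^ j) (Fin.castSucc i)) = Fin.last n
      · refine Or.inr ⟨by rw [pow_apply_succ, h], m + 1, ?_⟩
        rw [if_pos h] at hstep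
        rw [pow_apply_succ _ m, hstep, pow_apply_succ _ (j+1), pow_apply_succ _ j, h]
      · refine Or.inl ⟨m + 1, ?_⟩
        rw [if_neg h] at hstep
        rw [pow_apply_succ _ m, hstep, pow_apply_succ _ j]
    · exact Or.inl ⟨m, hm⟩

theorem minrep_iff :
    (∀ m : ℕ, i ≤ (projPerm σ ^ m) i) ↔
      (∀ j : ℕ, Fin.castSucc i ≤ (σ ^ j) (Fin.castSucc i)) := by
  constructor
  · intro h j
    rcases bwd σ i j with ⟨m, hm⟩ | ⟨hL, _⟩
    · rw [hm, Fin.castSucc_le_castSucc_iff]; exact h m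
    · rw [hL]; exact Fin.le_last _
  · intro h m
    obtain ⟨j, hj⟩ := fwd σ i m
    have := h j
    rw [← hj, Fin.castSucc_le_castSucc_iff] at this
    exact this

theorem last_minrep_iff :
    (∀ m : ℕ, Fin.last n ≤ (σ ^ m) (Fin.last n)) ↔ σ (Fin.last n) = Fin.last n := by
  constructor
  · intro h
    have h1 := h 1
    rw [pow_one] at h1
    exact le_antisymm (Fin.le_last _) h1
  · intro h m
    have : (σ ^ m) (Fin.last n) = Fin.last n := by
      induction m with
      | zero => rfl
      | succ m ih => rw [pow_apply_succ, ih, h]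
    rw [this]

theorem perm_mem_periodicPts {α : Type*} [Finite α] (σ : Equiv.Perm α) (y : α) :
    y ∈ Function.periodicPts ⇑σ := by
  refine Function.mk_mem_periodicPts (n := orderOf σ) (orderOf_pos σ) ?_
  show (⇑σ)^[orderOf σ] y = y
  rw [Equiv.Perm.iterate_eq_pow, pow_orderOf_eq_one]
  rfl

theorem perm_minPeriod_pos {α : Type*} [Finite α] (σ : Equiv.Perm α) (y : α) :
    0 < Function.minimalPeriod ⇑σ y :=
  Function.minimalPeriod_pos_of_mem_periodicPts (perm_mem_periodicPts σ y)

theorem perm_pow_minPeriod (σ : Equiv.Perm (Fin (n+1))) (y : Fin (n+1)) :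
    (σ ^ Function.minimalPeriod ⇑σ y) y = y :=
  Function.isPeriodicPt_minimalPeriod ⇑σ y

/-- Case A : the orbit of `castSucc i` under `σ` avoids `last n`. -/
theorem caseA_iter (hL : ∀ j : ℕ, (σ ^ j) (Fin.castSucc i) ≠ Fin.last n) :
    ∀ m : ℕ, Fin.castSucc ((projPerm σ ^ m) i) = (σ ^ m) (Fin.castSucc i) := by
  intro m
  induction m with
  | zero => rfl
  | succ m ih =>
    rw [pow_apply_succ, projPerm_step, ih, ← pow_apply_succ, if_neg (hL (m+1))]

theorem caseA_notin (hL : ∀ j : ℕ, (σ ^ j) (Fin.castSucc i) ≠ Fin.last n) :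
    ∀ m : ℕ, σ (Fin.last n) ≠ (σ ^ m) (Fin.castSucc i) := by
  intro m h
  set r := Function.minimalPeriod ⇑σ (Fin.castSucc i) with hr
  have hrpos : 0 < r := perm_minPeriod_pos σ _
  have hper : (σ ^ (m + r)) (Fin.castSucc i) = (σ ^ m) (Fin.castSucc i) :=
    Function.iterate_add_minimalPeriod_eq
  have hsucc : (σ ^ (m + r)) (Fin.castSucc i) = σ ((σ ^ (m + r - 1)) (Fin.castSucc i)) := by
    obtain ⟨k, hk⟩ : ∃ k, m + r - 1 = k := ⟨_, rfl⟩
    have h1 : m + r = k + 1 := by omega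
    rw [hk, h1, pow_apply_succ]
  have : σ (Fin.last n) = σ ((σ ^ (m + r - 1)) (Fin.castSucc i)) := by
    rw [h, ← hper, hsucc]
  exact hL (m + r - 1) (σ.injective this).symm

theorem caseA_minPeriod (hL : ∀ j : ℕ, (σ ^ j) (Fin.castSucc i) ≠ Fin.last n) :
    Function.minimalPeriod ⇑(projPerm σ) i = Function.minimalPeriod ⇑σ (Fin.castSucc i) := by
  rw [Function.minimalPeriod_eq_minimalPeriod_iff]
  intro m
  show (⇑(projPerm σ))^[m] i = i ↔ (⇑σ)^[m] (Fin.castSucc i) = Fin.castSucc i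
  rw [Equiv.Perm.iterate_eq_pow, Equiv.Perm.iterate_eq_pow]
  rw [← caseA_iter σ i hL m]
  exact ⟨fun h => by rw [h], fun h => Fin.castSucc_injective n h⟩

end Iter

theorem caseA_cycleProd (x : WP G (n+1)) (i : Fin n)
    (hL : ∀ j : ℕ, (x.right ^ j) (Fin.castSucc i) ≠ Fin.last n) :
    cycleProd (proj x) i = cycleProd x (Fin.castSucc i) := by
  unfold cycleProd
  have hright : (proj x).right = projPerm x.right := rfl
  rw [hright, caseA_minPeriod x.right i hL]
  congr 1
  refine List.map_congr_left ?_
  intro j _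
  show (proj x).left ((projPerm x.right ^ j) i) = x.left ((x.right ^ j) (Fin.castSucc i))
  have hleft : (proj x).left = fun i => if x.right (Fin.last n) = Fin.castSucc i
      then x.left (Fin.castSucc i) * x.left (Fin.last n)
      else x.left (Fin.castSucc i) := rfl
  rw [hleft]
  simp only
  rw [caseA_iter x.right i hL j, if_neg (caseA_notin x.right i hL j)]

end WP
end WreathPaper

namespace WreathPaper
namespace WP

variable {G : Type*} [Group G] {n : ℕ}

theorem pow_inj (σ : Equiv.Perm (Fin (n+1))) (y : Fin (n+1)) {j k : ℕ}
    (hj : j < Function.minimalPeriod ⇑σ y) (hk : k < Function.minimalPeriod ⇑σ y)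
    (h : (σ ^ j) y = (σ ^ k) y) : j = k :=
  Function.iterate_injOn_Iio_minimalPeriod hj hk h

theorem prodRev_succ {H : Type*} [Monoid H] (f : ℕ → H) (N : ℕ) :
    ((List.range (N+1)).reverse.map f).prod = f N * ((List.range N).reverse.map f).prod := by
  rw [List.range_succ, List.reverse_append]
  simp

section CaseB

variable {σ : Equiv.Perm (Fin (n+1))} {i : Fin n} {p : ℕ}

theorem caseB_iter (hp0 : 0 < p) (hpr : p < Function.minimalPeriod ⇑σ (Fin.castSucc i))
    (hpL : (σ ^ p) (Fin.castSucc i) = Fin.last n) :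
    ∀ m : ℕ, m ≤ Function.minimalPeriod ⇑σ (Fin.castSucc i) - 2 →
      Fin.castSucc ((projPerm σ ^ m) i) =
        (σ ^ (if m < p then m else m + 1)) (Fin.castSucc i) := by
  set r := Function.minimalPeriod ⇑σ (Fin.castSucc i) with hrdef
  have hcneL : Fin.castSucc i ≠ Fin.last n := (Fin.castSucc_lt_last i).ne
  intro m
  induction m with
  | zero => intro _; rw [if_pos hp0]; rfl
  | succ m ih =>
    intro hm
    have hm' : m ≤ r - 2 := le_trans (Nat.le_succ m) hm
    have ihm := ih hm'
    rw [pow_apply_succ, projPerm_step, ihm]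
    rcases Nat.lt_trichotomy (m+1) p with hlt | heq | hgt
    · have hmp : m < p := by omega
      rw [if_pos hmp, if_pos hlt]
      have hcond : ¬ σ ((σ ^ m) (Fin.castSucc i)) = Fin.last n := by
        intro hE
        have hE' : (σ ^ (m+1)) (Fin.castSucc i) = Fin.last n := by
          rw [pow_apply_succ]; exact hE
        have := pow_inj σ (Fin.castSucc i) (j := m+1) (k := p) (by omega) hpr
          (hE'.trans hpL.symm)
        omega
      rw [if_neg hcond, ← pow_apply_succ]
    · have hmp : m < p := by omega
      rw [if_pos hmp, if_neg (show ¬ m + 1 < p by omega)]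
      have hcond : σ ((σ ^ m) (Fin.castSucc i)) = Fin.last n := by
        rw [← pow_apply_succ, heq]; exact hpL
      rw [if_pos hcond, ← hpL, ← pow_apply_succ]
      have : p + 1 = m + 1 + 1 := by omega
      rw [this]
    · have hmp : ¬ m < p := by omega
      rw [if_neg hmp, if_neg (show ¬ m + 1 < p by omega)]
      have hcond : ¬ σ ((σ ^ (m+1)) (Fin.castSucc i)) = Fin.last n := by
        intro hE
        have hE' : (σ ^ (m+2)) (Fin.castSucc i) = Fin.last n := by
          rw [pow_apply_succ]; exact hE
        by_cases hend : m + 2 = r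
        · have hcc : (σ ^ (m+2)) (Fin.castSucc i) = Fin.castSucc i := by
            rw [hend]; exact perm_pow_minPeriod σ (Fin.castSucc i)
          exact hcneL (hcc.symm.trans hE')
        · have hlt2 : m + 2 < r := by omega
          have := pow_inj σ (Fin.castSucc i) hlt2 hpr (hE'.trans hpL.symm)
          omega
      rw [if_neg hcond, ← pow_apply_succ]

theorem caseB_fix (hp0 : 0 < p) (hpr : p < Function.minimalPeriod ⇑σ (Fin.castSucc i))
    (hpL : (σ ^ p) (Fin.castSucc i) = Fin.last n) :
    (projPerm σ ^ (Function.minimalPeriod ⇑σ (Fin.castSucc i) - 1)) i = i := by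
  set r := Function.minimalPeriod ⇑σ (Fin.castSucc i) with hrdef
  have hcneL : Fin.castSucc i ≠ Fin.last n := (Fin.castSucc_lt_last i).ne
  have h2 : 2 ≤ r := by omega
  apply Fin.castSucc_injective n
  have hiter := caseB_iter hp0 hpr hpL (r - 2) le_rfl
  have hsplit : r - 1 = (r - 2) + 1 := by omega
  rw [hsplit, pow_apply_succ, projPerm_step, hiter]
  by_cases hpe : p = r - 1
  · have hmp : r - 2 < p := by omega
    rw [if_pos hmp]
    have hcond : σ ((σ ^ (r-2)) (Fin.castSucc i)) = Fin.last n := by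
      rw [← pow_apply_succ, show r - 2 + 1 = p by omega]; exact hpL
    rw [if_pos hcond, ← hpL, ← pow_apply_succ, show p + 1 = r by omega]
    exact perm_pow_minPeriod σ (Fin.castSucc i)
  · have hmp : ¬ r - 2 < p := by omega
    rw [if_neg hmp, show r - 2 + 1 = r - 1 by omega]
    have hcond : ¬ σ ((σ ^ (r-1)) (Fin.castSucc i)) = Fin.last n := by
      intro hE
      have : (σ ^ r) (Fin.castSucc i) = Fin.last n := by
        rw [show r = (r-1)+1 by omega, pow_apply_succ]; exact hE
      rw [perm_pow_minPeriod σ (Fin.castSucc i)] at this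
      exact hcneL this
    rw [if_neg hcond, ← pow_apply_succ, show r - 1 + 1 = r by omega]
    exact perm_pow_minPeriod σ (Fin.castSucc i)

theorem caseB_minPeriod (hp0 : 0 < p) (hpr : p < Function.minimalPeriod ⇑σ (Fin.castSucc i))
    (hpL : (σ ^ p) (Fin.castSucc i) = Fin.last n) :
    Function.minimalPeriod ⇑(projPerm σ) i =
      Function.minimalPeriod ⇑σ (Fin.castSucc i) - 1 := by
  set r := Function.minimalPeriod ⇑σ (Fin.castSucc i) with hrdef
  set q := Function.minimalPeriod ⇑(projPerm σ) i with hqdef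
  have h2 : 2 ≤ r := by omega
  have hfix : Function.IsPeriodicPt ⇑(projPerm σ) (r - 1) i := caseB_fix hp0 hpr hpL
  have hle : q ≤ r - 1 := hfix.minimalPeriod_le (by omega)
  have hqpos : 0 < q := perm_minPeriod_pos _ _
  rcases eq_or_lt_of_le hle with heq | hlt
  · exact heq
  · exfalso
    have hq : (projPerm σ ^ q) i = i := Function.isPeriodicPt_minimalPeriod ⇑(projPerm σ) i
    have hiter := caseB_iter hp0 hpr hpL q (by omega)
    rw [hq] at hiter
    have h0 : (σ ^ 0) (Fin.castSucc i) = Fin.castSucc i := by rw [pow_zero]; rfl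
    have hfq : (if q < p then q else q + 1) = 0 := by
      refine pow_inj σ (Fin.castSucc i) ?_ ?_ ?_
      · split_ifs <;> omega
      · omega
      · rw [h0, ← hiter]
    split_ifs at hfq <;> omega

end CaseB

theorem prodRev_merge {H : Type*} [Monoid H] (a b : ℕ → H) (p N : ℕ)
    (hpN : p < N)
    (hb : ∀ m, m < N → b m = if m = p then a (p+1) * a p else if m < p then a m else a (m+1)) :
    ((List.range N).reverse.map b).prod = ((List.range (N+1)).reverse.map a).prod := by
  have step1 : ∀ M, M ≤ p →
      ((List.range M).reverse.map b).prod = ((List.range M).reverse.map a).prod := by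
    intro M hM
    induction M with
    | zero => rfl
    | succ M ih =>
      rw [prodRev_succ, prodRev_succ, ih (by omega), hb M (by omega),
        if_neg (by omega : ¬ M = p), if_pos (by omega : M < p)]
  have step2 : ∀ d, p + 1 + d ≤ N →
      ((List.range (p+1+d)).reverse.map b).prod =
        ((List.range (p+2+d)).reverse.map a).prod := by
    intro d
    induction d with
    | zero =>
      intro _
      simp only [Nat.add_zero]
      rw [prodRev_succ, hb p (by omega), if_pos rfl, step1 p le_rfl,
        show p + 2 = (p+1)+1 by omega, prodRev_succ, prodRev_succ, mul_assoc]
    | succ d ih =>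
      intro hd
      rw [show p+1+(d+1) = (p+1+d)+1 by omega, prodRev_succ, hb (p+1+d) (by omega),
        if_neg (by omega : ¬ p+1+d = p), if_neg (by omega : ¬ p+1+d < p),
        ih (by omega), show p+2+(d+1) = (p+2+d)+1 by omega, prodRev_succ,
        show p+1+d+1 = p+2+d by omega]
  obtain ⟨d, hd⟩ : ∃ d, N = p + 1 + d := ⟨N - (p+1), by omega⟩
  rw [hd, step2 d (by omega), show p+1+d+1 = p+2+d by omega]

theorem prodRev_rotate {H : Type*} [Monoid H] (a b : ℕ → H) (N : ℕ) (hN : 1 ≤ N)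
    (hb : ∀ m, m < N → b m = if m = 0 then a 0 * a N else a m) :
    ((List.range N).reverse.map b).prod = ((List.range N).reverse.map a).prod * a N := by
  have key : ∀ M, 1 ≤ M → M ≤ N →
      ((List.range M).reverse.map b).prod = ((List.range M).reverse.map a).prod * a N := by
    intro M
    induction M with
    | zero => intro h; omega
    | succ M ih =>
      intro _ hM
      by_cases hM0 : M = 0
      · subst hM0
        rw [prodRev_succ, prodRev_succ, hb 0 (by omega), if_pos rfl]
        simp [mul_assoc]
      · rw [prodRev_succ, prodRev_succ, hb M (by omega), if_neg hM0,
          ih (by omega) (by omega), ← mul_assoc]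
  exact key N hN le_rfl

theorem caseB_cycleProd (x : WP G (n+1)) (i : Fin n) {p : ℕ}
    (hp0 : 0 < p) (hpr : p < Function.minimalPeriod ⇑x.right (Fin.castSucc i))
    (hpL : (x.right ^ p) (Fin.castSucc i) = Fin.last n) :
    IsConj (cycleProd x (Fin.castSucc i)) (cycleProd (proj x) i) := by
  set r := Function.minimalPeriod ⇑x.right (Fin.castSucc i) with hrdef
  have hrpos : 0 < r := perm_minPeriod_pos _ _
  have h2 : 2 ≤ r := by omega
  have hminP : Function.minimalPeriod ⇑(proj x).right i = r - 1 :=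
    caseB_minPeriod hp0 hpr hpL
  have hcp1 : cycleProd x (Fin.castSucc i) =
      ((List.range r).reverse.map
        (fun j => x.left ((x.right ^ j) (Fin.castSucc i)))).prod := rfl
  have hcp2 : cycleProd (proj x) i =
      ((List.range (r-1)).reverse.map
        (fun m => (proj x).left (((proj x).right ^ m) i))).prod := by
    unfold cycleProd
    rw [hminP]
  have hbm : ∀ m, m ≤ r - 2 →
      (proj x).left (((proj x).right ^ m) i) =
        (if (if m < p then m else m + 1) = (p + 1) % r
         then x.left ((x.right ^ (if m < p then m else m + 1)) (Fin.castSucc i)) *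
              x.left ((x.right ^ p) (Fin.castSucc i))
         else x.left ((x.right ^ (if m < p then m else m + 1)) (Fin.castSucc i))) := by
    intro m hm
    have hiter : Fin.castSucc (((proj x).right ^ m) i) =
        (x.right ^ (if m < p then m else m + 1)) (Fin.castSucc i) :=
      caseB_iter hp0 hpr hpL m hm
    have hLval : x.left (Fin.last n) = x.left ((x.right ^ p) (Fin.castSucc i)) := by
      rw [hpL]
    show (if x.right (Fin.last n) = Fin.castSucc (((proj x).right ^ m) i)
          then x.left (Fin.castSucc (((proj x).right ^ m) i)) * x.left (Fin.last n)
          else x.left (Fin.castSucc (((proj x).right ^ m) i))) = _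
    rw [hiter, hLval]
    refine if_congr ?_ rfl rfl
    have hmod : (x.right ^ ((p + 1) % r)) (Fin.castSucc i) =
        (x.right ^ (p + 1)) (Fin.castSucc i) := Function.iterate_mod_minimalPeriod_eq
    have hL2 : x.right (Fin.last n) = (x.right ^ ((p + 1) % r)) (Fin.castSucc i) := by
      rw [hmod, pow_apply_succ, hpL]
    constructor
    · intro hcond
      exact pow_inj x.right (Fin.castSucc i) (by split_ifs <;> omega)
        (Nat.mod_lt _ hrpos) (hcond.symm.trans hL2)
    · intro hcond
      rw [hcond]; exact hL2
  by_cases hpe : p + 1 < r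
  · have hmerge := prodRev_merge
      (fun j => x.left ((x.right ^ j) (Fin.castSucc i)))
      (fun m => (proj x).left (((proj x).right ^ m) i)) p (r - 1) (by omega) ?_
    · have hre : ((List.range ((r-1)+1)).reverse.map
          (fun j => x.left ((x.right ^ j) (Fin.castSucc i)))).prod =
          ((List.range r).reverse.map
          (fun j => x.left ((x.right ^ j) (Fin.castSucc i)))).prod := by
        rw [show (r-1)+1 = r by omega]
      rw [hcp1, hcp2, ← hre, ← hmerge]
    · intro m hm
      rw [hbm m (by omega)]
      have hmodeq : (p + 1) % r = p + 1 := Nat.mod_eq_of_lt (by omega)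
      rw [hmodeq]
      by_cases h1 : m < p
      · rw [if_pos h1, if_neg (show ¬ m = p + 1 by omega),
          if_neg (show ¬ m = p by omega), if_pos h1]
      · by_cases h2' : m = p
        · rw [if_neg h1, if_pos (show m + 1 = p + 1 by omega), if_pos h2', h2']
        · rw [if_neg h1, if_neg (show ¬ m + 1 = p + 1 by omega), if_neg h2', if_neg h1]
  · have hpe' : p = r - 1 := by omega
    have hrot := prodRev_rotate
      (fun j => x.left ((x.right ^ j) (Fin.castSucc i)))
      (fun m => (proj x).left (((proj x).right ^ m) i)) (r - 1) (by omega) ?_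
    · have hQ : ((List.range r).reverse.map
          (fun j => x.left ((x.right ^ j) (Fin.castSucc i)))).prod =
          x.left ((x.right ^ (r-1)) (Fin.castSucc i)) *
          ((List.range (r-1)).reverse.map
            (fun j => x.left ((x.right ^ j) (Fin.castSucc i)))).prod := by
        conv_lhs => rw [show r = (r-1)+1 by omega]
        rw [prodRev_succ]
      rw [hcp1, hcp2, hQ, hrot]
      rw [isConj_iff]
      refine ⟨(x.left ((x.right ^ (r-1)) (Fin.castSucc i)))⁻¹, ?_⟩
      group
    · intro m hm
      rw [hbm m (by omega)]
      have hmodeq : (p + 1) % r = 0 := by rw [show p + 1 = r by omega, Nat.mod_self]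
      rw [hmodeq]
      have h1 : m < p := by omega
      rw [if_pos h1]
      by_cases h0 : m = 0
      · rw [if_pos h0, if_pos h0, h0, hpe']
      · rw [if_neg h0, if_neg h0]

theorem conj_cycleProd (x : WP G (n+1)) (i : Fin n) :
    IsConj (cycleProd x (Fin.castSucc i)) (cycleProd (proj x) i) := by
  by_cases hex : ∃ j, (x.right ^ j) (Fin.castSucc i) = Fin.last n
  · obtain ⟨j, hj⟩ := hex
    have hrpos : 0 < Function.minimalPeriod ⇑x.right (Fin.castSucc i) :=
      perm_minPeriod_pos _ _
    have hmod : (x.right ^ (j % Function.minimalPeriod ⇑x.right (Fin.castSucc i)))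
        (Fin.castSucc i) = (x.right ^ j) (Fin.castSucc i) :=
      Function.iterate_mod_minimalPeriod_eq
    have hpL := hmod.trans hj
    have hp0 : 0 < j % Function.minimalPeriod ⇑x.right (Fin.castSucc i) := by
      rcases Nat.eq_zero_or_pos (j % Function.minimalPeriod ⇑x.right (Fin.castSucc i))
        with h0 | h
      · exfalso
        rw [h0, pow_zero] at hpL
        exact (Fin.castSucc_lt_last i).ne hpL
      · exact h
    exact caseB_cycleProd x i hp0 (Nat.mod_lt _ hrpos) hpL
  · push_neg at hex
    rw [caseA_cycleProd x i hex]

end WP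
end WreathPaper

namespace WreathPaper
namespace WP

variable {G : Type*} [Group G] {n : ℕ}

theorem key_iff (x : WP G (n+1)) {c : Set G}
    (hc : ∀ g h : G, g ∈ c → IsConj g h → h ∈ c) (i : Fin n) :
    ((∀ m : ℕ, Fin.castSucc i ≤ (x.right ^ m) (Fin.castSucc i)) ∧
        cycleProd x (Fin.castSucc i) ∈ c)
      ↔ ((∀ m : ℕ, i ≤ ((proj x).right ^ m) i) ∧ cycleProd (proj x) i ∈ c) := by
  have hconj := conj_cycleProd x i
  constructor
  · rintro ⟨h1, h2⟩
    exact ⟨(minrep_iff x.right i).mpr h1, hc _ _ h2 hconj⟩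
  · rintro ⟨h1, h2⟩
    exact ⟨(minrep_iff x.right i).mp h1, hc _ _ h2 hconj.symm⟩

theorem cycleProd_last_fixed (x : WP G (n+1)) (hfix : x.right (Fin.last n) = Fin.last n) :
    cycleProd x (Fin.last n) = x.left (Fin.last n) := by
  unfold cycleProd
  have h1 : Function.minimalPeriod ⇑x.right (Fin.last n) = 1 :=
    Function.minimalPeriod_eq_one_iff_isFixedPt.mpr hfix
  rw [h1]
  rw [show List.range 1 = [0] from rfl]
  simp [pow_zero]

theorem keyL_iff (x : WP G (n+1)) (c : Set G) :
    ((∀ m : ℕ, Fin.last n ≤ (x.right ^ m) (Fin.last n)) ∧ cycleProd x (Fin.last n) ∈ c)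
      ↔ (x.right (Fin.last n) = Fin.last n ∧ x.left (Fin.last n) ∈ c) := by
  constructor
  · rintro ⟨h1, h2⟩
    have hfix := (last_minrep_iff x.right).mp h1
    rw [cycleProd_last_fixed x hfix] at h2
    exact ⟨hfix, h2⟩
  · rintro ⟨h1, h2⟩
    refine ⟨(last_minrep_iff x.right).mpr h1, ?_⟩
    rw [cycleProd_last_fixed x h1]
    exact h2

open scoped Classical in
theorem cycleCount_proj (x : WP G (n+1)) {c : Set G}
    (hc : ∀ g h : G, g ∈ c → IsConj g h → h ∈ c) :
    cycleCount x c = cycleCount (proj x) c +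
      (if x.right (Fin.last n) = Fin.last n ∧ x.left (Fin.last n) ∈ c then 1 else 0) := by
  unfold cycleCount
  set f : {i : Fin n // (∀ m : ℕ, i ≤ ((proj x).right ^ m) i) ∧ cycleProd (proj x) i ∈ c}
      ⊕ PLift (x.right (Fin.last n) = Fin.last n ∧ x.left (Fin.last n) ∈ c) →
      {j : Fin (n+1) // (∀ m : ℕ, j ≤ (x.right ^ m) j) ∧ cycleProd x j ∈ c} :=
    Sum.elim (fun a => ⟨Fin.castSucc a.1, (key_iff x hc a.1).mpr a.2⟩)
      (fun q => ⟨Fin.last n, (keyL_iff x c).mpr q.down⟩) with hf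
  have hbij : Function.Bijective f := by
    constructor
    · rintro (⟨a, ha⟩ | ⟨qa⟩) (⟨b, hb⟩ | ⟨qb⟩) huv
      · simp only [hf, Sum.elim_inl, Subtype.mk.injEq] at huv
        simp only [Sum.inl.injEq, Subtype.mk.injEq]
        exact Fin.castSucc_injective n huv
      · simp only [hf, Sum.elim_inl, Sum.elim_inr, Subtype.mk.injEq] at huv
        exact absurd huv (Fin.castSucc_lt_last a).ne
      · simp only [hf, Sum.elim_inl, Sum.elim_inr, Subtype.mk.injEq] at huv
        exact absurd huv.symm (Fin.castSucc_lt_last b).ne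
      · exact congrArg Sum.inr (Subsingleton.elim qa qb)
    · rintro ⟨j, hj⟩
      rcases Fin.eq_castSucc_or_eq_last j with ⟨i0, rfl⟩ | rfl
      · exact ⟨Sum.inl ⟨i0, (key_iff x hc i0).mp hj⟩, rfl⟩
      · exact ⟨Sum.inr ⟨(keyL_iff x c).mp hj⟩, rfl⟩
  have hcard := Nat.card_congr (Equiv.ofBijective f hbij)
  rw [Nat.card_sum] at hcard
  rw [← hcard]
  congr 1
  by_cases hr : x.right (Fin.last n) = Fin.last n ∧ x.left (Fin.last n) ∈ c
  · rw [if_pos hr]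
    haveI : Unique (PLift (x.right (Fin.last n) = Fin.last n ∧ x.left (Fin.last n) ∈ c)) :=
      ⟨⟨⟨hr⟩⟩, fun a => Subsingleton.elim _ _⟩
    exact Nat.card_unique
  · rw [if_neg hr]
    haveI : IsEmpty (PLift (x.right (Fin.last n) = Fin.last n ∧ x.left (Fin.last n) ∈ c)) :=
      ⟨fun a => hr a.down⟩
    exact Nat.card_of_isEmpty

theorem diag_mul (w : Fin n → G) (y : WP G n) :
    (⟨w, 1⟩ : WP G n) * y = ⟨fun i => w i * y.left i, y.right⟩ := by
  refine SemidirectProduct.ext ?_ ?_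
  · show w * (permAut G n 1) y.left = _
    rw [map_one]
    rfl
  · exact one_mul y.right

theorem proj_diag_mul (w : Fin (n+1) → G) (y : WP G (n+1)) (hw : w (Fin.last n) = 1) :
    proj ((⟨w, 1⟩ : WP G (n+1)) * y) =
      (⟨fun i => w (Fin.castSucc i), 1⟩ : WP G n) * proj y := by
  rw [diag_mul, diag_mul]
  refine SemidirectProduct.ext ?_ rfl
  funext i
  show (if y.right (Fin.last n) = Fin.castSucc i
        then (w (Fin.castSucc i) * y.left (Fin.castSucc i)) * (w (Fin.last n) * y.left (Fin.last n))
        else w (Fin.castSucc i) * y.left (Fin.castSucc i)) =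
    w (Fin.castSucc i) * (if y.right (Fin.last n) = Fin.castSucc i
        then y.left (Fin.castSucc i) * y.left (Fin.last n)
        else y.left (Fin.castSucc i))
  split_ifs with h
  · rw [hw, one_mul, mul_assoc]
  · rfl

theorem emb_diag (g : Fin n → G) :
    emb (Nat.le_succ n) (⟨g, 1⟩ : WP G n) =
      (⟨fun i => if hi : (i : ℕ) < n then g ⟨(i : ℕ), hi⟩ else 1, 1⟩ : WP G (n+1)) := by
  refine SemidirectProduct.ext rfl ?_
  show Equiv.Perm.extendDomain 1 (castEquiv (Nat.le_succ n)) = 1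
  exact Equiv.Perm.extendDomain_one _

end WP
end WreathPaper
namespace WreathPaper

open WP in
/-- The cocycle compatibility condition for left multiplication by an element
`w = ((g₁,…,gₙ), e_{S(n)})` with trivial permutation part. -/
theorem cocycle_condition_diagonal {G : Type*} [Group G] {n k : ℕ}
    (c : Fin k → Set G) (hconj : ∀ l, IsConjClass (c l))
    (hpart : ∀ g : G, ∃! l, g ∈ c l) (g : Fin n → G) (l : Fin k)
    (xn : WP G n) (xn1 : WP G (n + 1)) (h : proj xn1 = xn) :
    (cycleCount ((⟨g, 1⟩ : WP G n) * xn) (c l) : ℤ) - (cycleCount xn (c l) : ℤ)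
      = (cycleCount (emb (Nat.le_succ n) (⟨g, 1⟩ : WP G n) * xn1) (c l) : ℤ)
        - (cycleCount xn1 (c l) : ℤ) := by
  classical
  obtain ⟨g0, hg0⟩ := hconj l
  have hcc : ∀ a b : G, a ∈ c l → IsConj a b → b ∈ c l := by
    intro a b ha hab
    rw [hg0] at ha ⊢
    exact ha.trans hab
  have hw := emb_diag (G := G) (n := n) g
  set wext : Fin (n+1) → G := fun i => if hi : (i : ℕ) < n then g ⟨(i : ℕ), hi⟩ else 1
    with hwext
  have hwlast : wext (Fin.last n) = 1 := by
    simp only [hwext]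
    exact dif_neg (by simp)
  have e1 := cycleCount_proj xn1 hcc
  rw [h] at e1
  have e2 := cycleCount_proj ((⟨wext, 1⟩ : WP G (n+1)) * xn1) hcc
  have e3 : proj ((⟨wext, 1⟩ : WP G (n+1)) * xn1) = (⟨g, 1⟩ : WP G n) * xn := by
    rw [proj_diag_mul wext xn1 hwlast, h]
    have hfun : (fun i : Fin n => wext (Fin.castSucc i)) = g := by
      funext i
      simp only [hwext]
      have hi : ((Fin.castSucc i : Fin (n+1)) : ℕ) < n := by
        simpa using i.isLt
      rw [dif_pos hi]
      exact congrArg g (Fin.ext (Fin.coe_castSucc i))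
    rw [hfun]
  have e4 : ((⟨wext, 1⟩ : WP G (n+1)) * xn1).right = xn1.right := by rw [diag_mul]
  have e5 : ((⟨wext, 1⟩ : WP G (n+1)) * xn1).left (Fin.last n) = xn1.left (Fin.last n) := by
    rw [diag_mul]
    show wext (Fin.last n) * xn1.left (Fin.last n) = _
    rw [hwlast, one_mul]
  rw [e3, e4, e5] at e2
  rw [hw, e1, e2]
  push_cast
  ring

end WreathPaper
end

section
/- For all real t_1,…,t_k > 0 (equivalently, as a polynomial identity in commuting variables t_1,…,t_k): Σ_{x ∈ G≀S(n)} t_1^{[x]_{c_1}}·t_2^{[x]_{c_2}}⋯t_k^{[x]_{c_k}} = |G|^n·(t_1/ζ_{c_1}+⋯+t_k/ζ_{c_k})_n. Consequently P^Ewens_{t_1,…,t_k;n} is a probability distribution on G≀S(n). -/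
namespace WreathPaper

/-- `T = t₁/ζ_{c₁} + ⋯ + t_k/ζ_{c_k}` where `ζ_{c_l} = |G|/|c_l|`. -/
noncomputable def ewensT {G : Type*} [Group G] [Fintype G] {k : ℕ}
    (t : Fin k → ℝ) (c : Fin k → Set G) : ℝ :=
  ∑ l, t l * (Nat.card (c l) : ℝ) / (Fintype.card G : ℝ)

/-- The Ewens probability distribution on `G ≀ S(n)`:
`P(x) = t₁^{[x]_{c₁}} ⋯ t_k^{[x]_{c_k}} / (|G|ⁿ (T)ₙ)`. -/
noncomputable def ewensP {G : Type*} [Group G] [Fintype G] {k n : ℕ}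
    (t : Fin k → ℝ) (c : Fin k → Set G) (x : WP G n) : ℝ :=
  (∏ l, t l ^ WP.cycleCount x (c l)) /
    ((Fintype.card G : ℝ) ^ n * (ascPochhammer ℝ n).eval (ewensT t c))

end WreathPaper

open Equiv Function Finset

namespace WreathAux

variable {n : ℕ}

def IsRep (s : Equiv.Perm (Fin n)) (i : Fin n) : Prop := ∀ m : ℕ, i ≤ (s ^ m) i

noncomputable def RepSet (s : Equiv.Perm (Fin n)) : Finset (Fin n) :=
  @Finset.filter _ (IsRep s) (Classical.decPred _) Finset.univ

lemma mem_RepSet {s : Equiv.Perm (Fin n)} {i : Fin n} : i ∈ RepSet s ↔ IsRep s i := by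
  simp [RepSet]

variable (s : Equiv.Perm (Fin n))

noncomputable def orbitF (i : Fin n) : Finset (Fin n) :=
  @Finset.filter _ (fun j => ∃ m : ℕ, (s ^ m) i = j) (Classical.decPred _) Finset.univ

lemma mem_orbitF {i j : Fin n} : j ∈ orbitF s i ↔ ∃ m : ℕ, (s ^ m) i = j := by
  simp [orbitF]

lemma self_mem_orbitF (i : Fin n) : i ∈ orbitF s i := (mem_orbitF s).2 ⟨0, rfl⟩

lemma orbitF_trans {i j y : Fin n} (hj : j ∈ orbitF s i) (hy : y ∈ orbitF s j) :
    y ∈ orbitF s i := by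
  obtain ⟨m, hm⟩ := (mem_orbitF s).1 hj
  obtain ⟨m', hm'⟩ := (mem_orbitF s).1 hy
  exact (mem_orbitF s).2 ⟨m' + m, by rw [pow_add, Equiv.Perm.mul_apply, hm, hm']⟩

lemma orbitF_symm {i j : Fin n} (hj : j ∈ orbitF s i) : i ∈ orbitF s j := by
  obtain ⟨m, hm⟩ := (mem_orbitF s).1 hj
  have hk : 1 ≤ orderOf s := (orderOf_pos s)
  refine (mem_orbitF s).2 ⟨m * orderOf s - m, ?_⟩
  have h1 : m * orderOf s - m + m = m * orderOf s := by
    have : m ≤ m * orderOf s := Nat.le_mul_of_pos_right m (orderOf_pos s)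
    omega
  rw [← hm, ← Equiv.Perm.mul_apply, ← pow_add, h1, mul_comm, pow_mul, pow_orderOf_eq_one,
    one_pow]
  rfl

lemma orbitF_eq {i j : Fin n} (hj : j ∈ orbitF s i) : orbitF s j = orbitF s i := by
  ext y
  exact ⟨fun hy => orbitF_trans s hj hy, fun hy => orbitF_trans s (orbitF_symm s hj) hy⟩

lemma mem_periodicPts (i : Fin n) : i ∈ periodicPts ⇑s := by
  refine ⟨orderOf s, orderOf_pos s, ?_⟩
  show (⇑s)^[orderOf s] i = i
  rw [← Equiv.Perm.coe_pow, pow_orderOf_eq_one]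
  rfl

lemma minPeriod_pos (i : Fin n) : 0 < Function.minimalPeriod ⇑s i :=
  Function.minimalPeriod_pos_of_mem_periodicPts (mem_periodicPts s i)

lemma pow_mod_minPeriod (i : Fin n) (m : ℕ) :
    (s ^ (m % Function.minimalPeriod ⇑s i)) i = (s ^ m) i := by
  rw [Equiv.Perm.coe_pow, Equiv.Perm.coe_pow]
  exact Function.iterate_mod_minimalPeriod_eq

/-- the minimal representative of the cycle of `j`. -/
noncomputable def κ (j : Fin n) : Fin n :=
  (orbitF s j).min' ⟨j, self_mem_orbitF s j⟩

lemma κ_mem (j : Fin n) : κ s j ∈ orbitF s j := Finset.min'_mem _ _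

lemma κ_le {j y : Fin n} (hy : y ∈ orbitF s j) : κ s j ≤ y := Finset.min'_le _ _ hy

lemma isRep_κ (j : Fin n) : IsRep s (κ s j) := by
  intro m
  refine κ_le s (orbitF_trans s (κ_mem s j) ?_)
  exact (mem_orbitF s).2 ⟨m, rfl⟩

lemma κ_eq_of_mem {j j' : Fin n} (h : j' ∈ orbitF s j) : κ s j' = κ s j := by
  unfold κ
  congr 1
  exact orbitF_eq s h

lemma κ_eq_self {i : Fin n} (h : IsRep s i) : κ s i = i := by
  refine le_antisymm (κ_le s (self_mem_orbitF s i)) ?_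
  obtain ⟨m, hm⟩ := (mem_orbitF s).1 (κ_mem s i)
  rw [← hm]
  exact h m

lemma κ_pow {r : Fin n} (h : IsRep s r) (m : ℕ) : κ s ((s ^ m) r) = r := by
  rw [κ_eq_of_mem s ((mem_orbitF s).2 ⟨m, rfl⟩), κ_eq_self s h]


/-- decomposition of a permutation of `Fin (n+1)` by the position of `last`. -/
noncomputable def D (n : ℕ) :
    Equiv.Perm (Fin (n + 1)) ≃ Option (Fin n) × Equiv.Perm (Fin n) :=
  (Equiv.permCongr finSuccEquivLast).trans Equiv.Perm.decomposeOption

lemma D_symm_apply (p : Option (Fin n)) (e : Equiv.Perm (Fin n)) (x : Fin (n + 1)) :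
    (D n).symm (p, e) x =
      finSuccEquivLast.symm ((Equiv.swap none p * e.optionCongr) (finSuccEquivLast x)) := rfl

lemma D_none_castSucc (e : Equiv.Perm (Fin n)) (i : Fin n) :
    (D n).symm (none, e) i.castSucc = (e i).castSucc := by
  simp [D_symm_apply]

lemma D_none_last (e : Equiv.Perm (Fin n)) :
    (D n).symm (none, e) (Fin.last n) = Fin.last n := by
  simp [D_symm_apply]

lemma D_some_castSucc (e : Equiv.Perm (Fin n)) (p₀ i : Fin n) :
    (D n).symm (some p₀, e) i.castSucc =
      if e i = p₀ then Fin.last n else (e i).castSucc := by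
  rcases eq_or_ne (e i) p₀ with h | h
  · simp [D_symm_apply, h]
  · have : (Equiv.swap (none : Option (Fin n)) (some p₀)) (some (e i)) = some (e i) :=
      Equiv.swap_apply_of_ne_of_ne (by simp) (by simpa using h)
    simp [D_symm_apply, this, h]

lemma D_some_last (e : Equiv.Perm (Fin n)) (p₀ : Fin n) :
    (D n).symm (some p₀, e) (Fin.last n) = p₀.castSucc := by
  simp [D_symm_apply]


section nonecase
variable (e : Equiv.Perm (Fin n))

lemma D_none_pow_castSucc (m : ℕ) (i : Fin n) :
    ((D n).symm (none, e) ^ m) i.castSucc = ((e ^ m) i).castSucc := by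
  induction m with
  | zero => rfl
  | succ m ih => rw [pow_succ', pow_succ', Equiv.Perm.mul_apply, Equiv.Perm.mul_apply, ih,
      D_none_castSucc]

lemma D_none_pow_last (m : ℕ) :
    ((D n).symm (none, e) ^ m) (Fin.last n) = Fin.last n := by
  induction m with
  | zero => rfl
  | succ m ih => rw [pow_succ', Equiv.Perm.mul_apply, ih, D_none_last]

lemma isRep_D_none_castSucc (i : Fin n) :
    IsRep ((D n).symm (none, e)) i.castSucc ↔ IsRep e i := by
  constructor
  · intro h m
    have := h m
    rw [D_none_pow_castSucc] at this
    exact (Fin.castSucc_le_castSucc_iff).1 this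
  · intro h m
    rw [D_none_pow_castSucc]
    exact (Fin.castSucc_le_castSucc_iff).2 (h m)

lemma isRep_D_none_last : IsRep ((D n).symm (none, e)) (Fin.last n) := by
  intro m; rw [D_none_pow_last]

lemma RepSet_D_none :
    RepSet ((D n).symm (none, e)) =
      insert (Fin.last n) ((RepSet e).map ⟨Fin.castSucc, Fin.castSucc_injective n⟩) := by
  ext j
  induction j using Fin.lastCases with
  | last => simp [mem_RepSet, isRep_D_none_last]
  | cast i =>
      simp only [mem_RepSet, Finset.mem_insert, Finset.mem_map, Function.Embedding.coeFn_mk,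
        isRep_D_none_castSucc]
      constructor
      · intro h; exact Or.inr ⟨i, h, rfl⟩
      · rintro (h | ⟨i', hi', h⟩)
        · exact absurd h (Fin.castSucc_lt_last i).ne
        · rcases Fin.castSucc_injective n h with rfl
          exact hi'

lemma card_RepSet_D_none :
    (RepSet ((D n).symm (none, e))).card = (RepSet e).card + 1 := by
  rw [RepSet_D_none, Finset.card_insert_of_notMem, Finset.card_map]
  simp only [Finset.mem_map, Function.Embedding.coeFn_mk, not_exists]
  rintro i ⟨_, h⟩
  exact (Fin.castSucc_lt_last i).ne h

end nonecase

section somecase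
variable (e : Equiv.Perm (Fin n)) (p₀ : Fin n)

private lemma D_some_traj (i : Fin n) (m : ℕ) :
    (∃ m', ((D n).symm (some p₀, e) ^ m) i.castSucc = ((e ^ m') i).castSucc) ∨
    (((D n).symm (some p₀, e) ^ m) i.castSucc = Fin.last n ∧ ∃ m', (e ^ m') i = p₀) := by
  induction m with
  | zero => exact Or.inl ⟨0, rfl⟩
  | succ m ih =>
      rcases ih with ⟨m', hm'⟩ | ⟨hl, m', hm'⟩
      · rw [pow_succ', Equiv.Perm.mul_apply, hm', D_some_castSucc]
        by_cases h : e ((e ^ m') i) = p₀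
        · refine Or.inr ⟨by simp [h], ⟨m' + 1, ?_⟩⟩
          rw [pow_succ', Equiv.Perm.mul_apply, h]
        · refine Or.inl ⟨m' + 1, ?_⟩
          rw [if_neg h, pow_succ', Equiv.Perm.mul_apply]
      · rw [pow_succ', Equiv.Perm.mul_apply, hl, D_some_last]
        exact Or.inl ⟨m', by rw [hm']⟩

private lemma D_some_surj_traj (i : Fin n) (m' : ℕ) :
    ∃ m, ((D n).symm (some p₀, e) ^ m) i.castSucc = ((e ^ m') i).castSucc := by
  induction m' with
  | zero => exact ⟨0, rfl⟩
  | succ m' ih =>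
      obtain ⟨m, hm⟩ := ih
      by_cases h : e ((e ^ m') i) = p₀
      · refine ⟨m + 2, ?_⟩
        have : m + 2 = (m + 1) + 1 := rfl
        rw [this, pow_succ', Equiv.Perm.mul_apply, pow_succ', Equiv.Perm.mul_apply, hm,
          D_some_castSucc, if_pos h, D_some_last, ← h]
        rw [pow_succ', Equiv.Perm.mul_apply]
      · refine ⟨m + 1, ?_⟩
        rw [pow_succ', Equiv.Perm.mul_apply, hm, D_some_castSucc, if_neg h,
          pow_succ', Equiv.Perm.mul_apply]

lemma isRep_D_some_castSucc (i : Fin n) :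
    IsRep ((D n).symm (some p₀, e)) i.castSucc ↔ IsRep e i := by
  constructor
  · intro h m'
    obtain ⟨m, hm⟩ := D_some_surj_traj e p₀ i m'
    have := h m
    rw [hm] at this
    exact (Fin.castSucc_le_castSucc_iff).1 this
  · intro h m
    rcases D_some_traj e p₀ i m with ⟨m', hm'⟩ | ⟨hl, _⟩
    · rw [hm']
      exact (Fin.castSucc_le_castSucc_iff).2 (h m')
    · rw [hl]; exact Fin.le_last _

lemma not_isRep_D_some_last : ¬ IsRep ((D n).symm (some p₀, e)) (Fin.last n) := by
  intro h
  have := h 1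
  rw [pow_one, D_some_last] at this
  exact absurd this (not_le.2 (Fin.castSucc_lt_last p₀))

lemma RepSet_D_some :
    RepSet ((D n).symm (some p₀, e)) =
      (RepSet e).map ⟨Fin.castSucc, Fin.castSucc_injective n⟩ := by
  ext j
  induction j using Fin.lastCases with
  | last =>
      simp only [mem_RepSet, not_isRep_D_some_last, false_iff, Finset.mem_map,
        Function.Embedding.coeFn_mk, not_exists]
      rintro i ⟨_, h⟩
      exact (Fin.castSucc_lt_last i).ne h
  | cast i =>
      simp only [mem_RepSet, Finset.mem_map, Function.Embedding.coeFn_mk,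
        isRep_D_some_castSucc]
      constructor
      · intro h; exact ⟨i, h, rfl⟩
      · rintro ⟨i', hi', h⟩
        rcases Fin.castSucc_injective n h with rfl
        exact hi'

lemma card_RepSet_D_some :
    (RepSet ((D n).symm (some p₀, e))).card = (RepSet e).card := by
  rw [RepSet_D_some, Finset.card_map]

end somecase

theorem sum_pow_card_RepSet (n : ℕ) (x : ℝ) :
    ∑ s : Equiv.Perm (Fin n), x ^ (RepSet s).card = (ascPochhammer ℝ n).eval x := by
  induction n with
  | zero =>
      simp [RepSet]
  | succ n ih =>
      rw [← Equiv.sum_comp (D n).symm (fun s => x ^ (RepSet s).card), Fintype.sum_prod_type,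
        Fintype.sum_option]
      simp only [card_RepSet_D_none, card_RepSet_D_some, ascPochhammer_succ_eval, ← ih]
      rw [Finset.sum_const, Finset.card_univ, Fintype.card_fin]
      simp only [pow_succ, nsmul_eq_mul, ← Finset.sum_mul]
      ring


section cyclesum

variable {G : Type*} [Group G] [Fintype G]

lemma sum_cycle (f : G → ℝ) (T : ℕ) (hT : 0 < T) :
    ∑ w : Fin T → G, f (((List.finRange T).reverse.map w).prod)
      = (Fintype.card G : ℝ) ^ (T - 1) * ∑ v : G, f v := by
  obtain _ | m := T
  · exact absurd hT (lt_irrefl 0)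
  have key : ∀ (a : G) (w' : Fin m → G),
      ((List.finRange (m + 1)).reverse.map (Fin.cons a w')).prod
        = ((List.finRange m).reverse.map w').prod * a := by
    intro a w'
    rw [List.finRange_succ, List.reverse_cons, List.map_append, List.prod_append]
    simp [List.map_map, Function.comp_def]
  calc ∑ w : Fin (m + 1) → G, f (((List.finRange (m + 1)).reverse.map w).prod)
      = ∑ p : G × (Fin m → G),
          f (((List.finRange (m + 1)).reverse.map
              (Fin.consEquiv (fun _ => G) p)).prod) :=
        (Equiv.sum_comp (Fin.consEquiv (fun _ => G))
          (fun w => f (((List.finRange (m + 1)).reverse.map w).prod))).symm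
    _ = ∑ p : G × (Fin m → G),
          f (((List.finRange m).reverse.map p.2).prod * p.1) := by
        refine Finset.sum_congr rfl fun p _ => ?_
        rw [show (Fin.consEquiv (fun _ => G)) p = Fin.cons p.1 p.2 from rfl, key]
    _ = ∑ w' : Fin m → G, ∑ a : G,
          f (((List.finRange m).reverse.map w').prod * a) := by
        rw [Fintype.sum_prod_type]
        exact Finset.sum_comm
    _ = ∑ w' : Fin m → G, ∑ v : G, f v := by
        refine Finset.sum_congr rfl fun w' _ => ?_
        exact Equiv.sum_comp (Equiv.mulLeft (((List.finRange m).reverse.map w').prod)) f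
    _ = (Fintype.card G : ℝ) ^ m * ∑ v : G, f v := by
        rw [Finset.sum_const, Finset.card_univ, nsmul_eq_mul]
        norm_cast
        rw [Fintype.card_fun, Fintype.card_fin]

end cyclesum

end WreathAux

namespace WP'

open WreathAux WreathPaper WreathPaper.WP

variable {G : Type*} [Group G] [Fintype G] {n : ℕ}

lemma cycleProd_mk (g : Fin n → G) (s : Equiv.Perm (Fin n)) (i : Fin n) :
    cycleProd (⟨g, s⟩ : WP G n) i
      = (((List.finRange (Function.minimalPeriod ⇑s i)).reverse).map
          (fun m : Fin _ => g ((s ^ (m : ℕ)) i))).prod := by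
  unfold cycleProd
  have hmc : ∀ k, (List.finRange k).map (fun m : Fin k => (m : ℕ)) = List.range k :=
    fun k => List.ext_getElem (by simp) (by simp)
  rw [← hmc, List.map_reverse, List.map_map, List.map_reverse]
  rfl

noncomputable instance (s : Equiv.Perm (Fin n)) : Fintype {i : Fin n // IsRep s i} :=
  @Subtype.fintype _ _ (Classical.decPred _) _

/-- the representative of the cycle of `j`, as a term of the subtype. -/
noncomputable def kap (s : Equiv.Perm (Fin n)) (j : Fin n) : {i : Fin n // IsRep s i} :=
  ⟨κ s j, isRep_κ s j⟩

noncomputable instance (s : Equiv.Perm (Fin n)) (r : {i : Fin n // IsRep s i}) :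
    Fintype {j : Fin n // kap s j = r} :=
  @Subtype.fintype _ _ (Classical.decPred _) _

noncomputable def ψ (s : Equiv.Perm (Fin n)) (r : {i : Fin n // IsRep s i})
    (m : Fin (Function.minimalPeriod ⇑s r.1)) : {j : Fin n // kap s j = r} :=
  ⟨(s ^ (m : ℕ)) r.1, Subtype.ext (κ_pow s r.2 (m : ℕ))⟩

lemma ψ_bijective (s : Equiv.Perm (Fin n)) (r : {i : Fin n // IsRep s i}) :
    Function.Bijective (ψ s r) := by
  constructor
  · intro m m' h
    have h2 : (⇑s)^[(m : ℕ)] r.1 = (⇑s)^[(m' : ℕ)] r.1 := by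
      have h3 : (s ^ (m : ℕ)) r.1 = (s ^ (m' : ℕ)) r.1 := congrArg Subtype.val h
      simpa only [Equiv.Perm.coe_pow] using h3
    exact Fin.ext (Function.iterate_injOn_Iio_minimalPeriod m.isLt m'.isLt h2)
  · rintro ⟨j, hj⟩
    have hj' : κ s j = r.1 := congrArg Subtype.val hj
    have h1 : r.1 ∈ orbitF s j := hj' ▸ κ_mem s j
    obtain ⟨m, hm⟩ := (mem_orbitF s).1 (orbitF_symm s h1)
    refine ⟨⟨m % Function.minimalPeriod ⇑s r.1, Nat.mod_lt _ (minPeriod_pos s r.1)⟩, ?_⟩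
    apply Subtype.ext
    show (s ^ (m % Function.minimalPeriod ⇑s r.1)) r.1 = j
    rw [pow_mod_minPeriod, hm]

lemma card_fib (s : Equiv.Perm (Fin n)) (r : {i : Fin n // IsRep s i}) :
    Fintype.card {j : Fin n // kap s j = r} = Function.minimalPeriod ⇑s r.1 :=
  ((Fintype.card_of_bijective (ψ_bijective s r)).symm).trans (Fintype.card_fin _)

lemma sum_minPeriod (s : Equiv.Perm (Fin n)) :
    ∑ r : {i : Fin n // IsRep s i}, Function.minimalPeriod ⇑s r.1 = n := by
  have h1 : Fintype.card (Σ r : {i : Fin n // IsRep s i}, {j : Fin n // kap s j = r})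
      = Fintype.card (Fin n) := Fintype.card_congr (Equiv.sigmaFiberEquiv (kap s))
  rw [Fintype.card_sigma, Fintype.card_fin] at h1
  calc ∑ r : {i : Fin n // IsRep s i}, Function.minimalPeriod ⇑s r.1
      = ∑ r : {i : Fin n // IsRep s i}, Fintype.card {j : Fin n // kap s j = r} :=
        Finset.sum_congr rfl fun r _ => (card_fib s r).symm
    _ = n := h1

lemma card_rep (s : Equiv.Perm (Fin n)) :
    Fintype.card {i : Fin n // IsRep s i} = (RepSet s).card :=
  Fintype.card_of_subtype (RepSet s) fun _ => mem_RepSet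

/-- the key summation over `G^n` for a fixed permutation `s`. -/
lemma sum_over_g (f : G → ℝ) (s : Equiv.Perm (Fin n)) :
    ∑ g : Fin n → G, ∏ i ∈ RepSet s, f (cycleProd (⟨g, s⟩ : WP G n) i)
      = (Fintype.card G : ℝ) ^ (n - (RepSet s).card)
          * (∑ v : G, f v) ^ (RepSet s).card := by
  classical
  set W : ∀ r : {i : Fin n // IsRep s i}, ({j : Fin n // kap s j = r} → G) → ℝ :=
    fun r u =>
      f (((List.finRange (Function.minimalPeriod ⇑s r.1)).reverse.map
          (fun m => u (ψ s r m))).prod) with hW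
  have hφ : Function.Bijective
      (fun (g : Fin n → G) (r : {i : Fin n // IsRep s i})
        (x : {j : Fin n // kap s j = r}) => g x.1) := by
    constructor
    · intro g g' h
      funext j
      exact congrFun (congrFun h (kap s j)) ⟨j, rfl⟩
    · intro h
      refine ⟨fun j => h (kap s j) ⟨j, rfl⟩, ?_⟩
      funext r x
      obtain ⟨j, hj⟩ := x
      subst hj
      rfl
  calc ∑ g : Fin n → G, ∏ i ∈ RepSet s, f (cycleProd (⟨g, s⟩ : WP G n) i)
      = ∑ g : Fin n → G, ∏ r : {i : Fin n // IsRep s i},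
          W r (fun x => g x.1) := by
        refine Finset.sum_congr rfl fun g _ => ?_
        rw [Finset.prod_subtype (RepSet s) (fun i => mem_RepSet)
          (fun i => f (cycleProd (⟨g, s⟩ : WP G n) i))]
        refine Finset.prod_congr rfl fun r _ => ?_
        rw [hW, cycleProd_mk]
        rfl
    _ = ∑ h : ∀ r : {i : Fin n // IsRep s i}, ({j : Fin n // kap s j = r} → G),
          ∏ r, W r (h r) :=
        Fintype.sum_bijective _ hφ _ _ (fun g => rfl)
    _ = ∏ r : {i : Fin n // IsRep s i}, ∑ u : {j : Fin n // kap s j = r} → G, W r u :=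
        (Fintype.prod_sum W).symm
    _ = ∏ r : {i : Fin n // IsRep s i},
          ((Fintype.card G : ℝ) ^ (Function.minimalPeriod ⇑s r.1 - 1) * ∑ v : G, f v) := by
        refine Finset.prod_congr rfl fun r _ => ?_
        rw [← sum_cycle f _ (minPeriod_pos s r.1)]
        exact Fintype.sum_equiv
          (Equiv.arrowCongr (Equiv.ofBijective (ψ s r) (ψ_bijective s r)).symm (Equiv.refl G))
          _ _ (fun u => rfl)
    _ = (Fintype.card G : ℝ) ^ (n - (RepSet s).card) * (∑ v : G, f v) ^ (RepSet s).card := by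
        rw [Finset.prod_mul_distrib, Finset.prod_const, Finset.prod_pow_eq_pow_sum,
          Finset.card_univ, card_rep]
        congr 2
        have h1 : ∑ r : {i : Fin n // IsRep s i},
            ((Function.minimalPeriod ⇑s r.1 - 1) + 1)
              = ∑ r : {i : Fin n // IsRep s i}, Function.minimalPeriod ⇑s r.1 :=
          Finset.sum_congr rfl fun r _ => Nat.succ_pred_eq_of_pos (minPeriod_pos s r.1)
        rw [Finset.sum_add_distrib, Finset.sum_const, Finset.card_univ, card_rep,
          sum_minPeriod, smul_eq_mul, mul_one] at h1
        omega

end WP'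

namespace WreathPaper

open WP in
/-- `Σ_{x ∈ G≀S(n)} t₁^{[x]_{c₁}} ⋯ t_k^{[x]_{c_k}} = |G|ⁿ (t₁/ζ_{c₁}+⋯+t_k/ζ_{c_k})ₙ`;
consequently the Ewens measure is a probability distribution on `G ≀ S(n)`. -/
theorem ewens_sum {G : Type*} [Group G] [Fintype G] {n k : ℕ}
    (c : Fin k → Set G) (hconj : ∀ l, IsConjClass (c l))
    (hpart : ∀ g : G, ∃! l, g ∈ c l) (t : Fin k → ℝ) (ht : ∀ l, 0 < t l) :
    (∑ x : WP G n, ∏ l, t l ^ cycleCount x (c l))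
        = (Fintype.card G : ℝ) ^ n * (ascPochhammer ℝ n).eval (ewensT t c)
      ∧ (∀ x : WP G n, 0 ≤ ewensP t c x)
      ∧ (∑ x : WP G n, ewensP t c x) = 1 := by
  classical
  open WreathAux WP' in
  -- the weight function on `G`
  set f : G → ℝ := fun g => t (hpart g).exists.choose with hf
  have hfspec : ∀ g : G, g ∈ c ((hpart g).exists.choose) := fun g => (hpart g).exists.choose_spec
  have hfuniq : ∀ (g : G) (l), g ∈ c l → (hpart g).exists.choose = l := fun g l h =>
    (hpart g).unique (hfspec g) h
  have hiff : ∀ (g : G) (l), (hpart g).exists.choose = l ↔ g ∈ c l := fun g l =>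
    ⟨fun h => h ▸ hfspec g, fun h => hfuniq g l h⟩
  have cardG_pos : (0 : ℝ) < (Fintype.card G : ℝ) := by
    exact_mod_cast Fintype.card_pos
  -- Step A : rewrite the weight of `x` as a product over cycle representatives
  have stepA : ∀ x : WP G n,
      ∏ l, t l ^ cycleCount x (c l) = ∏ i ∈ RepSet x.right, f (cycleProd x i) := by
    intro x
    have hcount : ∀ l, cycleCount x (c l)
        = ((RepSet x.right).filter (fun i => cycleProd x i ∈ c l)).card := by
      intro l
      unfold cycleCount
      rw [Nat.card_eq_fintype_card, Fintype.card_subtype]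
      congr 1
      ext i
      simp [mem_RepSet, IsRep]
    rw [← Finset.prod_fiberwise_of_maps_to
      (g := fun i => (hpart (cycleProd x i)).exists.choose) (t := Finset.univ)
      (fun i _ => Finset.mem_univ _) (fun i => f (cycleProd x i))]
    refine Finset.prod_congr rfl fun l _ => ?_
    have h1 : ∏ i ∈ (RepSet x.right).filter
        (fun i => (hpart (cycleProd x i)).exists.choose = l), f (cycleProd x i)
          = ∏ i ∈ (RepSet x.right).filter
              (fun i => (hpart (cycleProd x i)).exists.choose = l), t l := by
      refine Finset.prod_congr rfl fun i hi => ?_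
      simp only [Finset.mem_filter] at hi
      exact congrArg t hi.2
    rw [h1, Finset.prod_const, hcount,
      Finset.filter_congr (fun i _ => hiff (cycleProd x i) l)]
  -- Step B : the sum of the weight function
  have hNat : ∀ l, (Nat.card (c l) : ℕ)
      = (Finset.univ.filter (fun v : G => v ∈ c l)).card := by
    intro l
    rw [Nat.card_eq_fintype_card (α := ↥(c l))]
    exact Fintype.card_of_subtype _ (fun v => by simp)
  have stepB : ∑ v : G, f v = (Fintype.card G : ℝ) * ewensT t c := by
    have h1 : ∑ v : G, f v = ∑ l, t l * (Nat.card (c l) : ℝ) := by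
      rw [← Finset.sum_fiberwise_of_maps_to
        (g := fun v : G => (hpart v).exists.choose) (t := Finset.univ)
        (fun v _ => Finset.mem_univ _) f]
      refine Finset.sum_congr rfl fun l _ => ?_
      have h2 : ∑ v ∈ Finset.univ.filter (fun v : G => (hpart v).exists.choose = l), f v
          = ∑ v ∈ Finset.univ.filter (fun v : G => (hpart v).exists.choose = l), t l := by
        refine Finset.sum_congr rfl fun v hv => ?_
        simp only [Finset.mem_filter] at hv
        exact congrArg t hv.2
      rw [h2, Finset.sum_const, hNat, nsmul_eq_mul,
        Finset.filter_congr (fun v _ => hiff v l), mul_comm]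
    rw [h1, ewensT, Finset.mul_sum]
    refine Finset.sum_congr rfl fun l _ => ?_
    field_simp
  -- the main identity
  have main : (∑ x : WP G n, ∏ l, t l ^ cycleCount x (c l))
      = (Fintype.card G : ℝ) ^ n * (ascPochhammer ℝ n).eval (ewensT t c) := by
    calc ∑ x : WP G n, ∏ l, t l ^ cycleCount x (c l)
        = ∑ x : WP G n, ∏ i ∈ RepSet x.right, f (cycleProd x i) :=
          Finset.sum_congr rfl fun x _ => stepA x
      _ = ∑ p : (Fin n → G) × Equiv.Perm (Fin n),
            ∏ i ∈ RepSet ((wpEquivProd G n).symm p).right,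
              f (cycleProd ((wpEquivProd G n).symm p) i) :=
          (Equiv.sum_comp (wpEquivProd G n).symm
            (fun x : WP G n => ∏ i ∈ RepSet x.right, f (cycleProd x i))).symm
      _ = ∑ sp : Equiv.Perm (Fin n), ∑ g : Fin n → G,
            ∏ i ∈ RepSet sp, f (cycleProd (⟨g, sp⟩ : WP G n) i) := by
          rw [Fintype.sum_prod_type]
          exact Finset.sum_comm
      _ = ∑ sp : Equiv.Perm (Fin n),
            (Fintype.card G : ℝ) ^ (n - (RepSet sp).card)
              * ((Fintype.card G : ℝ) * ewensT t c) ^ (RepSet sp).card := by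
          refine Finset.sum_congr rfl fun sp _ => ?_
          rw [sum_over_g f sp, stepB]
      _ = ∑ sp : Equiv.Perm (Fin n),
            (Fintype.card G : ℝ) ^ n * (ewensT t c) ^ (RepSet sp).card := by
          refine Finset.sum_congr rfl fun sp _ => ?_
          rw [mul_pow, ← mul_assoc, ← pow_add]
          congr 2
          have : (RepSet sp).card ≤ n := by
            have := Finset.card_le_card (Finset.subset_univ (RepSet sp))
            simpa using this
          omega
      _ = (Fintype.card G : ℝ) ^ n * (ascPochhammer ℝ n).eval (ewensT t c) := by
          rw [← Finset.mul_sum, sum_pow_card_RepSet]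
  -- positivity of `T`
  have hT0 : 0 < ewensT t c := by
    obtain ⟨l₁, hl₁, -⟩ := hpart 1
    rw [ewensT]
    refine Finset.sum_pos' (fun l _ => ?_) ⟨l₁, Finset.mem_univ _, ?_⟩
    · exact div_nonneg (mul_nonneg (ht l).le (Nat.cast_nonneg _)) cardG_pos.le
    · apply div_pos (mul_pos (ht l₁) ?_) cardG_pos
      have : 0 < Nat.card (c l₁) := by
        have : Nonempty ↥(c l₁) := ⟨⟨1, hl₁⟩⟩
        exact Nat.card_pos
      exact_mod_cast this
  have hden : (0 : ℝ) < (Fintype.card G : ℝ) ^ n * (ascPochhammer ℝ n).eval (ewensT t c) :=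
    mul_pos (pow_pos cardG_pos n) (ascPochhammer_pos n _ hT0)
  refine ⟨main, fun x => ?_, ?_⟩
  · unfold ewensP
    apply div_nonneg _ hden.le
    exact Finset.prod_nonneg fun l _ => pow_nonneg (ht l).le _
  · unfold ewensP
    rw [← Finset.sum_div, main, div_self hden.ne']

end WreathPaper
end
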